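/- arXiv:1205.0153 — 5 statements merged into one kernel-verified Lean document; each statement's English description precedes it below -/
import Mathlib

section
/- Let Γ be a connected graph whose adjacency matrix has exactly d+1 distinct eigenvalues and whose odd-girth is 2d+1. If λ is an eigenvalue of Γ, then -λ is not an eigenvalue of Γ. In particular, all eigenvalues of Γ are nonzero. -/
open Matrix

private lemma trace_pow_eq_sum_eigenvalues' {V : Type*} [Fintype V] [DecidableEq V]
    {A : Matrix V V ℝ} (hA : A.IsHermitian) (ℓ : ℕ) :
    Matrix.trace (A ^ ℓ) = ∑ i, hA.eigenvalues i ^ ℓ := by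
  set U : Matrix V V ℝ := (hA.eigenvectorUnitary : Matrix V V ℝ) with hUdef
  set D : Matrix V V ℝ := Matrix.diagonal (RCLike.ofReal ∘ hA.eigenvalues) with hDdef
  have hU : star U * U = 1 := Matrix.mem_unitaryGroup_iff'.mp hA.eigenvectorUnitary.2
  have hU' : U * star U = 1 := Matrix.mem_unitaryGroup_iff.mp hA.eigenvectorUnitary.2
  have key : ∀ m : ℕ, A ^ m = U * D ^ m * star U := by
    intro m
    induction m with
    | zero => simpa using hU'.symm
    | succ m ih =>
      have hAst : A = U * D * star U := hA.spectral_theorem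
      calc A ^ (m + 1) = A ^ m * A := pow_succ A m
        _ = (U * D ^ m * star U) * (U * D * star U) := by rw [ih, ← hAst]
        _ = U * D ^ m * (star U * U) * D * star U := by
            simp only [Matrix.mul_assoc]
        _ = U * D ^ (m + 1) * star U := by
            rw [hU]; simp only [Matrix.mul_one, pow_succ, Matrix.mul_assoc]
  rw [key ℓ, Matrix.trace_mul_cycle, hU, Matrix.one_mul]
  rw [hDdef, Matrix.diagonal_pow, Matrix.trace_diagonal]
  simp [Pi.pow_apply]

/-- Let `G` be a connected graph whose adjacency matrix has exactly `d + 1` distinct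
eigenvalues and whose odd-girth is `2 * d + 1` (no odd cycle of smaller length, i.e. the
trace of every smaller odd power of the adjacency matrix vanishes, while
`trace (A ^ (2 * d + 1)) > 0`). If `μ` is an eigenvalue of `G`, then `-μ` is not an
eigenvalue of `G`; in particular, all eigenvalues of `G` are nonzero. -/
theorem no_opposite_eigenvalues {V : Type*} [Fintype V] [DecidableEq V]
    (G : SimpleGraph V) [DecidableRel G.Adj] (d : ℕ)
    (hconn : G.Connected)
    (heig : (spectrum ℝ (G.adjMatrix ℝ)).ncard = d + 1)
    (hshort : ∀ ℓ : ℕ, Odd ℓ → ℓ < 2 * d + 1 → Matrix.trace (G.adjMatrix ℝ ^ ℓ) = 0)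
    (hgirth : 0 < Matrix.trace (G.adjMatrix ℝ ^ (2 * d + 1))) :
    (∀ μ : ℝ, μ ∈ spectrum ℝ (G.adjMatrix ℝ) → -μ ∉ spectrum ℝ (G.adjMatrix ℝ)) ∧
    (∀ μ : ℝ, μ ∈ spectrum ℝ (G.adjMatrix ℝ) → μ ≠ 0) := by
  classical
  have hA : (G.adjMatrix ℝ).IsHermitian := by
    ext i j
    simp [Matrix.conjTranspose_apply, SimpleGraph.adjMatrix_apply, SimpleGraph.adj_comm]
  set A : Matrix V V ℝ := G.adjMatrix ℝ with hAdef
  set lam : V → ℝ := hA.eigenvalues with hlamdef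
  have hspec : spectrum ℝ A = Set.range lam := hA.spectrum_real_eq_range_eigenvalues
  have main : ∀ μ : ℝ, μ ∈ spectrum ℝ A → -μ ∉ spectrum ℝ A := by
    intro μ hμ hneg
    -- Finset of eigenvalues
    set Sf : Finset ℝ := Finset.image lam Finset.univ with hSfdef
    have hScoe : Set.range lam = (Sf : Set ℝ) := by
      rw [hSfdef]; simp [Set.image_univ]
    have hScard : Sf.card = d + 1 := by
      rw [← Set.ncard_coe_finset, ← hScoe, ← hspec, heig]
    have hμS : μ ∈ Sf := by
      rw [hspec, hScoe] at hμ; exact_mod_cast hμ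
    have hnegS : -μ ∈ Sf := by
      rw [hspec, hScoe] at hneg; exact_mod_cast hneg
    -- nonzero eigenvalue indices and distinct squares
    set F : Finset V := Finset.univ.filter (fun i => lam i ≠ 0) with hFdef
    set Tf : Finset ℝ := F.image (fun i => lam i ^ 2) with hTfdef
    set Wf : Finset ℝ := Sf.filter (fun x => x ≠ 0) with hWfdef
    have hTW : Tf = Wf.image (fun x => x ^ 2) := by
      ext s
      simp only [hTfdef, hWfdef, hFdef, hSfdef, Finset.mem_image, Finset.mem_filter,
        Finset.mem_univ, true_and]
      constructor
      · rintro ⟨i, hi, rfl⟩; exact ⟨lam i, ⟨⟨i, rfl⟩, hi⟩, rfl⟩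
      · rintro ⟨x, ⟨⟨i, rfl⟩, hx⟩, rfl⟩; exact ⟨i, hx, rfl⟩
    have hTcard : Tf.card ≤ d := by
      rcases eq_or_ne μ 0 with h0 | h0
      · -- 0 is an eigenvalue
        have hz : (0 : ℝ) ∈ Sf := h0 ▸ hμS
        have hWsub : Wf ⊆ Sf.erase 0 := by
          intro x hx
          rw [hWfdef, Finset.mem_filter] at hx
          exact Finset.mem_erase.mpr ⟨hx.2, hx.1⟩
        calc Tf.card ≤ Wf.card := hTW ▸ Finset.card_image_le
          _ ≤ (Sf.erase 0).card := Finset.card_le_card hWsub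
          _ = Sf.card - 1 := Finset.card_erase_of_mem hz
          _ ≤ d := by omega
      · -- μ and -μ are distinct nonzero eigenvalues
        have hμW : μ ∈ Wf := Finset.mem_filter.mpr ⟨hμS, h0⟩
        have hnegW : -μ ∈ Wf := Finset.mem_filter.mpr ⟨hnegS, neg_ne_zero.mpr h0⟩
        have hne : μ ≠ -μ := by
          intro h; exact h0 (by linarith [h])
        have hsub : Tf ⊆ (Wf.erase (-μ)).image (fun x => x ^ 2) := by
          rw [hTW]
          intro s hs
          rcases Finset.mem_image.mp hs with ⟨x, hx, rfl⟩
          rcases eq_or_ne x (-μ) with rfl | hxne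
          · exact Finset.mem_image.mpr ⟨μ, Finset.mem_erase.mpr ⟨hne, hμW⟩, by ring⟩
          · exact Finset.mem_image.mpr ⟨x, Finset.mem_erase.mpr ⟨hxne, hx⟩, rfl⟩
        have hWcard : Wf.card ≤ d + 1 := by
          calc Wf.card ≤ Sf.card := Finset.card_le_card (Finset.filter_subset _ _)
            _ = d + 1 := hScard
        calc Tf.card ≤ ((Wf.erase (-μ)).image (fun x => x ^ 2)).card :=
              Finset.card_le_card hsub
          _ ≤ (Wf.erase (-μ)).card := Finset.card_image_le
          _ = Wf.card - 1 := Finset.card_erase_of_mem hnegW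
          _ ≤ d := by omega
    -- the fiberwise sums
    set c : ℝ → ℝ := fun s => ∑ i ∈ F.filter (fun i => lam i ^ 2 = s), lam i with hcdef
    have hgroup : ∀ k : ℕ, ∑ s ∈ Tf, c s * s ^ k = ∑ i ∈ Finset.univ, lam i ^ (2 * k + 1) := by
      intro k
      have h1 : ∑ s ∈ Tf, ∑ i ∈ F.filter (fun i => lam i ^ 2 = s), lam i * (lam i ^ 2) ^ k
          = ∑ i ∈ F, lam i * (lam i ^ 2) ^ k := by
        apply Finset.sum_fiberwise_of_maps_to
        intro i hi
        exact Finset.mem_image.mpr ⟨i, hi, rfl⟩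
      have h2 : ∀ s ∈ Tf, ∑ i ∈ F.filter (fun i => lam i ^ 2 = s), lam i * (lam i ^ 2) ^ k
          = c s * s ^ k := by
        intro s _
        rw [hcdef, Finset.sum_mul]
        apply Finset.sum_congr rfl
        intro i hi
        rw [(Finset.mem_filter.mp hi).2]
      have h3 : ∑ i ∈ F, lam i * (lam i ^ 2) ^ k = ∑ i ∈ Finset.univ, lam i ^ (2 * k + 1) := by
        rw [hFdef, Finset.sum_filter]
        apply Finset.sum_congr rfl
        intro i _
        by_cases h : lam i = 0
        · simp [h]
        · rw [if_pos h]; ring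
      rw [Finset.sum_congr rfl h2] at h1
      rw [h1, h3]
    have htr : ∀ ℓ : ℕ, Matrix.trace (A ^ ℓ) = ∑ i, lam i ^ ℓ :=
      fun ℓ => trace_pow_eq_sum_eigenvalues' hA ℓ
    have hzero : ∀ k : ℕ, k < d → ∑ s ∈ Tf, c s * s ^ k = 0 := by
      intro k hk
      rw [hgroup k, ← htr (2 * k + 1)]
      exact hshort (2 * k + 1) ⟨k, by ring⟩ (by omega)
    -- Vandermonde-type argument: all c s vanish
    have hc0 : ∀ t ∈ Tf, c t = 0 := by
      intro t ht
      have hd1 : 1 ≤ Tf.card := Finset.card_pos.mpr ⟨t, ht⟩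
      set p : Polynomial ℝ := ∏ s ∈ Tf.erase t, (Polynomial.X - Polynomial.C s) with hpdef
      have hpdeg : p.natDegree < d := by
        have : p.natDegree = (Tf.erase t).card := by
          rw [hpdef, Polynomial.natDegree_prod _ _ (fun s _ => Polynomial.X_sub_C_ne_zero s)]
          simp [Polynomial.natDegree_X_sub_C]
        rw [this, Finset.card_erase_of_mem ht]
        omega
      have hsum0 : ∑ s ∈ Tf, c s * p.eval s = 0 := by
        have heval : ∀ s : ℝ, p.eval s = ∑ k ∈ Finset.range d, p.coeff k * s ^ k :=
          fun s => Polynomial.eval_eq_sum_range' hpdeg s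
        calc ∑ s ∈ Tf, c s * p.eval s
            = ∑ s ∈ Tf, ∑ k ∈ Finset.range d, c s * (p.coeff k * s ^ k) := by
              apply Finset.sum_congr rfl
              intro s _; rw [heval s, Finset.mul_sum]
          _ = ∑ k ∈ Finset.range d, p.coeff k * ∑ s ∈ Tf, c s * s ^ k := by
              rw [Finset.sum_comm]
              apply Finset.sum_congr rfl
              intro k _
              rw [Finset.mul_sum]
              apply Finset.sum_congr rfl
              intro s _; ring
          _ = 0 := by
              apply Finset.sum_eq_zero
              intro k hk
              rw [hzero k (Finset.mem_range.mp hk), mul_zero]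
      have hsingle : ∑ s ∈ Tf, c s * p.eval s = c t * p.eval t := by
        apply Finset.sum_eq_single t
        · intro s hs hst
          have : p.eval s = 0 := by
            rw [hpdef, Polynomial.eval_prod]
            apply Finset.prod_eq_zero (Finset.mem_erase.mpr ⟨hst, hs⟩)
            simp
          rw [this, mul_zero]
        · intro h; exact absurd ht h
      have hevalt : p.eval t ≠ 0 := by
        rw [hpdef, Polynomial.eval_prod]
        apply Finset.prod_ne_zero_iff.mpr
        intro s hs
        have : s ≠ t := (Finset.mem_erase.mp hs).1
        simp [sub_ne_zero, this.symm]
      have : c t * p.eval t = 0 := by rw [← hsingle, hsum0]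
      exact (mul_eq_zero.mp this).resolve_right hevalt
    -- contradiction with the (2d+1)-trace
    have hfinal : Matrix.trace (A ^ (2 * d + 1)) = 0 := by
      rw [htr, ← hgroup d]
      exact Finset.sum_eq_zero fun s hs => by rw [hc0 s hs, zero_mul]
    rw [hAdef] at hfinal
    exact absurd hfinal (ne_of_gt hgirth)
  refine ⟨main, fun μ hμ h0 => main μ hμ ?_⟩
  rw [h0, neg_zero, ← h0]
  exact hμ
end

section
/- Let Γ be a connected graph whose adjacency matrix A has exactly d+1 distinct eigenvalues and whose odd-girth is 2d+1. Then Γ is spectrum-regular: for each i = 0, 1, ..., d, the diagonal of the principal idempotent E_i of A is constant, i.e., the local multiplicity m_u(λ_i) = (E_i)_{uu} does not depend on the vertex u. Consequently Γ is walk-regular and regular. -/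
open Matrix Finset Polynomial

/-- Let `G` be a connected graph whose adjacency matrix `A` has exactly `d + 1` distinct
eigenvalues `lam 0 > lam 1 > ⋯ > lam d`, with principal idempotents `E i` (the symmetric
pairwise-orthogonal idempotents summing to the identity with `A = ∑ i, lam i • E i`; i.e.
`E i` is the orthogonal projection onto `Ker (A - lam i • 1)`), and whose odd-girth is
`2 * d + 1` (no odd cycle of smaller length, i.e. the trace of every smaller odd power of
`A` vanishes, while `trace (A ^ (2 * d + 1)) > 0`). Then `G` is spectrum-regular: each
`E i` has constant diagonal, i.e. the local multiplicity `m_u (lam i) = (E i) u u` does not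
depend on `u`. Consequently, `G` is walk-regular and regular. -/
theorem spectrum_regular_of_odd_girth {V : Type*} [Fintype V] [DecidableEq V]
    (G : SimpleGraph V) [DecidableRel G.Adj] (d : ℕ)
    (lam : Fin (d + 1) → ℝ) (E : Fin (d + 1) → Matrix V V ℝ)
    (hconn : G.Connected)
    (hanti : StrictAnti lam)
    (hspec : spectrum ℝ (G.adjMatrix ℝ) = Set.range lam)
    (hsum : ∑ i, E i = 1)
    (hprod : ∀ i j, E i * E j = if i = j then E i else 0)
    (hsymm : ∀ i, (E i).IsSymm)
    (hdecomp : G.adjMatrix ℝ = ∑ i, lam i • E i)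
    (hshort : ∀ ℓ : ℕ, Odd ℓ → ℓ < 2 * d + 1 → Matrix.trace (G.adjMatrix ℝ ^ ℓ) = 0)
    (hgirth : 0 < Matrix.trace (G.adjMatrix ℝ ^ (2 * d + 1))) :
    (∀ (i : Fin (d + 1)) (u v : V), E i u u = E i v v) ∧
    (∀ (ℓ : ℕ) (u v : V), (G.adjMatrix ℝ ^ ℓ) u u = (G.adjMatrix ℝ ^ ℓ) v v) ∧
    (∃ k : ℕ, G.IsRegularOfDegree k) := by
  have hV : Nonempty V := hconn.nonempty
  -- power decomposition
  have hpow : ∀ ℓ : ℕ, (G.adjMatrix ℝ) ^ ℓ = ∑ i, (lam i ^ ℓ) • E i := by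
    intro ℓ
    induction ℓ with
    | zero => simp only [pow_zero, one_smul]; exact hsum.symm
    | succ n ih =>
      rw [pow_succ, ih, hdecomp, Finset.sum_mul_sum]
      refine Finset.sum_congr rfl fun i _ => ?_
      rw [Finset.sum_eq_single i]
      · rw [smul_mul_assoc, mul_smul_comm, hprod, if_pos rfl, smul_smul, ← pow_succ]
      · intro j _ hj
        rw [smul_mul_assoc, mul_smul_comm, hprod, if_neg (fun h => hj h.symm), smul_zero,
          smul_zero]
      · intro h; exact absurd (Finset.mem_univ i) h
  -- trace formula
  have htr : ∀ ℓ : ℕ, Matrix.trace ((G.adjMatrix ℝ) ^ ℓ)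
      = ∑ i, lam i ^ ℓ * Matrix.trace (E i) := by
    intro ℓ
    rw [hpow ℓ, Matrix.trace_sum]
    exact Finset.sum_congr rfl fun i _ => Matrix.trace_smul _ _
  -- diagonal formula
  have hdiag : ∀ (ℓ : ℕ) (u : V), ((G.adjMatrix ℝ) ^ ℓ) u u = ∑ i, lam i ^ ℓ * E i u u := by
    intro ℓ u
    rw [hpow ℓ]
    simp [Matrix.sum_apply]
  -- nonnegativity of entries of powers
  have hnn : ∀ (ℓ : ℕ) (u v : V), 0 ≤ ((G.adjMatrix ℝ) ^ ℓ) u v := by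
    intro ℓ
    induction ℓ with
    | zero =>
      intro u v; rw [pow_zero, Matrix.one_apply]
      split_ifs <;> norm_num
    | succ n ih =>
      intro u v; rw [pow_succ, Matrix.mul_apply]
      refine Finset.sum_nonneg fun w _ => mul_nonneg (ih u w) ?_
      rw [SimpleGraph.adjMatrix_apply]
      split_ifs <;> norm_num
  -- zero diagonal for short odd powers
  have hzero : ∀ ℓ : ℕ, Odd ℓ → ℓ < 2 * d + 1 → ∀ u : V, ((G.adjMatrix ℝ) ^ ℓ) u u = 0 := by
    intro ℓ h1 h2 u
    have h3 := hshort ℓ h1 h2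
    have h4 : ∑ v : V, ((G.adjMatrix ℝ) ^ ℓ) v v = 0 := by
      simpa [Matrix.trace, Matrix.diag] using h3
    exact (Finset.sum_eq_zero_iff_of_nonneg (fun v _ => hnn ℓ v v)).mp h4 u (Finset.mem_univ u)
  -- facts about indices
  have hodd : ∀ j : Fin (d + 1), j ≠ 0 → Odd (2 * (j : ℕ) - 1) ∧ 2 * (j : ℕ) - 1 < 2 * d + 1 := by
    intro j hj
    have hj1 : 1 ≤ (j : ℕ) := by
      rcases Nat.eq_zero_or_pos (j : ℕ) with h | h
      · exact absurd (Fin.ext (by simp [h]) : j = 0) hj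
      · exact h
    have hj2 : (j : ℕ) ≤ d := Nat.lt_succ_iff.mp j.isLt
    exact ⟨⟨(j : ℕ) - 1, by omega⟩, by omega⟩
  -- trace of each E i, total
  have hTE : ∑ i, Matrix.trace (E i) = (Fintype.card V : ℝ) := by
    rw [← Matrix.trace_sum, hsum, Matrix.trace_one]
  have hcard : 0 < (Fintype.card V : ℝ) := by
    exact_mod_cast Fintype.card_pos
  -- the key matrix
  set W : Matrix (Fin (d + 1)) (Fin (d + 1)) ℝ :=
    fun j i => if j = 0 then 1 else lam i ^ (2 * (j : ℕ) - 1) with hW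
  -- trivial left kernel
  have hkey : ∀ a : Fin (d + 1) → ℝ, (∀ i, ∑ j, a j * W j i = 0) → a = 0 := by
    intro a ha
    -- step 1 : a 0 = 0
    have hS : ∀ j : Fin (d + 1), j ≠ 0 → ∑ i, W j i * Matrix.trace (E i) = 0 := by
      intro j hj
      have h1 : ∑ i, W j i * Matrix.trace (E i)
          = Matrix.trace ((G.adjMatrix ℝ) ^ (2 * (j : ℕ) - 1)) := by
        rw [htr]
        exact Finset.sum_congr rfl fun i _ => by rw [hW]; simp [hj]
      rw [h1, hshort _ (hodd j hj).1 (hodd j hj).2]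
    have ha0 : a 0 = 0 := by
      have h1 : (0 : ℝ) = ∑ i, (∑ j, a j * W j i) * Matrix.trace (E i) := by
        symm; exact Finset.sum_eq_zero fun i _ => by rw [ha i, zero_mul]
      have h2 : ∑ i, (∑ j, a j * W j i) * Matrix.trace (E i)
          = ∑ j, a j * ∑ i, W j i * Matrix.trace (E i) := by
        simp_rw [Finset.sum_mul, Finset.mul_sum]
        rw [Finset.sum_comm]
        exact Finset.sum_congr rfl fun j _ => Finset.sum_congr rfl fun i _ => by ring
      rw [h2] at h1
      rw [Finset.sum_eq_single (0 : Fin (d + 1))] at h1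
      · have h3 : ∑ i, W 0 i * Matrix.trace (E i) = (Fintype.card V : ℝ) := by
          rw [← hTE]
          exact Finset.sum_congr rfl fun i _ => by rw [hW]; simp
        rw [h3] at h1
        have := h1.symm
        nlinarith
      · intro j _ hj; rw [hS j hj, mul_zero]
      · intro h; exact absurd (Finset.mem_univ _) h
    -- step 2 : the rest vanish
    by_contra hne
    have hex : ∃ j : Fin (d + 1), j ≠ 0 ∧ a j ≠ 0 := by
      by_contra hno
      push_neg at hno
      apply hne
      funext j
      by_cases hj : j = 0
      · simp [hj, ha0]
      · simp [hno j hj]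
    obtain ⟨j0, hj00, hj0⟩ := hex
    have hd1 : 1 ≤ d := by
      have h1 : 1 ≤ (j0 : ℕ) := by
        rcases Nat.eq_zero_or_pos (j0 : ℕ) with h | h
        · exact absurd (Fin.ext (by simp [h]) : j0 = 0) hj00
        · exact h
      have h2 : (j0 : ℕ) ≤ d := Nat.lt_succ_iff.mp j0.isLt
      omega
    -- the polynomial h
    set p : Polynomial ℝ :=
      ∑ j ∈ Finset.univ.erase (0 : Fin (d + 1)), Polynomial.C (a j) * Polynomial.X ^ ((j : ℕ) - 1)
      with hp
    have hp0 : p ≠ 0 := by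
      intro h0
      have hc : p.coeff ((j0 : ℕ) - 1) = a j0 := by
        rw [hp, Polynomial.finset_sum_coeff]
        rw [Finset.sum_eq_single j0]
        · simp [Polynomial.coeff_C_mul, Polynomial.coeff_X_pow]
        · intro j hjmem hjne
          have hj1 : 1 ≤ (j : ℕ) := by
            rcases Nat.eq_zero_or_pos (j : ℕ) with h | h
            · exact absurd (Fin.ext (by simp [h]) : j = 0) (Finset.ne_of_mem_erase hjmem)
            · exact h
          have hj01 : 1 ≤ (j0 : ℕ) := by
            rcases Nat.eq_zero_or_pos (j0 : ℕ) with h | h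
            · exact absurd (Fin.ext (by simp [h]) : j0 = 0) hj00
            · exact h
          have hne2 : (j0 : ℕ) - 1 ≠ (j : ℕ) - 1 := by
            intro hh
            exact hjne (Fin.ext (by omega))
          simp [Polynomial.coeff_C_mul, Polynomial.coeff_X_pow, hne2]
        · intro h; exact absurd (Finset.mem_erase.mpr ⟨hj00, Finset.mem_univ _⟩) h
      rw [h0] at hc
      simp at hc
      exact hj0 hc.symm
    -- evaluation identity
    have heval : ∀ i, lam i * p.eval (lam i ^ 2) = 0 := by
      intro i
      have h1 : ∑ j ∈ Finset.univ.erase (0 : Fin (d + 1)), a j * lam i ^ (2 * (j : ℕ) - 1) = 0 := by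
        have h2 := ha i
        rw [← Finset.add_sum_erase _ _ (Finset.mem_univ (0 : Fin (d + 1)))] at h2
        have h3 : a 0 * W 0 i = 0 := by rw [ha0, zero_mul]
        have h4 : ∑ j ∈ Finset.univ.erase (0 : Fin (d + 1)), a j * W j i
            = ∑ j ∈ Finset.univ.erase (0 : Fin (d + 1)), a j * lam i ^ (2 * (j : ℕ) - 1) := by
          refine Finset.sum_congr rfl fun j hj => ?_
          rw [hW]; simp [Finset.ne_of_mem_erase hj]
        rw [h3, zero_add, h4] at h2
        exact h2
      rw [hp, Polynomial.eval_finset_sum, Finset.mul_sum]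
      rw [← h1]
      refine Finset.sum_congr rfl fun j hj => ?_
      have hj1 : 1 ≤ (j : ℕ) := by
        rcases Nat.eq_zero_or_pos (j : ℕ) with h | h
        · exact absurd (Fin.ext (by simp [h]) : j = 0) (Finset.ne_of_mem_erase hj)
        · exact h
      rw [Polynomial.eval_mul, Polynomial.eval_C, Polynomial.eval_pow, Polynomial.eval_X]
      rw [← pow_mul]
      have : lam i * (a j * lam i ^ (2 * ((j : ℕ) - 1))) = a j * lam i ^ (2 * ((j : ℕ) - 1) + 1) := by
        rw [pow_succ]; ring
      rw [this]
      congr 2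
      omega
    -- monic normalization
    have hlc : (p.leadingCoeff)⁻¹ ≠ 0 := inv_ne_zero (Polynomial.leadingCoeff_ne_zero.mpr hp0)
    have hmon : (p * Polynomial.C (p.leadingCoeff)⁻¹).Monic :=
      Polynomial.monic_mul_leadingCoeff_inv hp0
    set p' : Polynomial ℝ := p * Polynomial.C (p.leadingCoeff)⁻¹ with hp'
    have heval' : ∀ i, lam i * p'.eval (lam i ^ 2) = 0 := by
      intro i
      rw [hp', Polynomial.eval_mul, Polynomial.eval_C, ← mul_assoc, heval i, zero_mul]
    set ρ : Polynomial ℝ := Polynomial.X ^ d %ₘ p' with hρ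
    have hdd : ρ + p' * (Polynomial.X ^ d /ₘ p') = Polynomial.X ^ d :=
      Polynomial.modByMonic_add_div (Polynomial.X ^ d) p'
    -- key evaluation of the (2d+1)-th power
    have hval : ∀ i, lam i ^ (2 * d + 1) = lam i * ρ.eval (lam i ^ 2) := by
      intro i
      have h1 := congrArg (Polynomial.eval (lam i ^ 2)) hdd
      rw [Polynomial.eval_add, Polynomial.eval_mul, Polynomial.eval_pow, Polynomial.eval_X] at h1
      have h2 : lam i * (ρ.eval (lam i ^ 2)
          + p'.eval (lam i ^ 2) * (Polynomial.X ^ d /ₘ p').eval (lam i ^ 2))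
          = lam i * (lam i ^ 2) ^ d := by rw [h1]
      have h3 : lam i * (lam i ^ 2) ^ d = lam i ^ (2 * d + 1) := by
        rw [← pow_mul, pow_succ]; ring
      have h4 : lam i * p'.eval (lam i ^ 2) * (Polynomial.X ^ d /ₘ p').eval (lam i ^ 2) = 0 := by
        rw [heval' i, zero_mul]
      nlinarith [h2, h3, h4]
    -- degree bound on ρ
    have hdegp : p.natDegree ≤ d - 1 := by
      rw [hp]
      refine Polynomial.natDegree_sum_le_of_forall_le _ _ fun j hj => ?_
      refine le_trans (Polynomial.natDegree_C_mul_X_pow_le _ _) ?_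
      have : (j : ℕ) ≤ d := Nat.lt_succ_iff.mp j.isLt
      omega
    have hsupp : ∀ k ∈ ρ.support, 2 * k + 1 < 2 * d + 1 := by
      intro k hk
      have h1 : (k : WithBot ℕ) ≤ ρ.degree :=
        Polynomial.le_degree_of_ne_zero (Polynomial.mem_support_iff.mp hk)
      have h2 : ρ.degree < p'.degree := Polynomial.degree_modByMonic_lt _ hmon
      have h3 : p'.degree ≤ (p'.natDegree : WithBot ℕ) := Polynomial.degree_le_natDegree
      have h4 : p'.natDegree ≤ d - 1 := by
        refine le_trans (Polynomial.natDegree_mul_le) ?_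
        rw [Polynomial.natDegree_C]
        simpa using hdegp
      have h5 : (k : WithBot ℕ) < ((d - 1 : ℕ) : WithBot ℕ) := by
        refine lt_of_le_of_lt h1 (lt_of_lt_of_le h2 (le_trans h3 ?_))
        exact_mod_cast h4
      have h6 : k < d - 1 := by exact_mod_cast h5
      omega
    -- final contradiction : the trace of A^(2d+1) vanishes
    have htr2 : Matrix.trace ((G.adjMatrix ℝ) ^ (2 * d + 1)) = 0 := by
      rw [htr]
      have hterm : ∀ i : Fin (d + 1), lam i ^ (2 * d + 1) * Matrix.trace (E i)
          = ∑ k ∈ ρ.support, ρ.coeff k * (lam i ^ (2 * k + 1) * Matrix.trace (E i)) := by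
        intro i
        rw [hval i, Polynomial.eval_eq_sum, Polynomial.sum_def, Finset.mul_sum, Finset.sum_mul]
        refine Finset.sum_congr rfl fun k _ => ?_
        have h1 : (lam i ^ 2) ^ k = lam i ^ (2 * k) := (pow_mul _ 2 k).symm
        have h2 : lam i ^ (2 * k + 1) = lam i ^ (2 * k) * lam i := pow_succ _ _
        rw [h1, h2]; ring
      rw [Finset.sum_congr rfl fun i _ => hterm i, Finset.sum_comm]
      refine Finset.sum_eq_zero fun k hk => ?_
      have h1 : ∑ i, ρ.coeff k * (lam i ^ (2 * k + 1) * Matrix.trace (E i))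
          = ρ.coeff k * Matrix.trace ((G.adjMatrix ℝ) ^ (2 * k + 1)) := by
        rw [htr, Finset.mul_sum]
      rw [h1, hshort _ ⟨k, rfl⟩ (hsupp k hk), mul_zero]
    rw [htr2] at hgirth
    exact lt_irrefl 0 hgirth
  -- determinant nonzero
  have hdet : W.det ≠ 0 := by
    intro h0
    obtain ⟨v, hv, hvW⟩ := Matrix.exists_vecMul_eq_zero_iff.mpr h0
    apply hv
    apply hkey v
    intro i
    have h1 := congr_fun hvW i
    simpa [Matrix.vecMul, dotProduct] using h1
  -- per-vertex conditions
  have hrow0 : ∀ u : V, ∑ i, E i u u = 1 := by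
    intro u
    have h1 := congr_fun (congr_fun hsum u) u
    simpa [Matrix.sum_apply, Matrix.one_apply] using h1
  have hrowj : ∀ (j : Fin (d + 1)), j ≠ 0 → ∀ u : V,
      ∑ i, lam i ^ (2 * (j : ℕ) - 1) * E i u u = 0 := by
    intro j hj u
    have h1 := hzero _ (hodd j hj).1 (hodd j hj).2 u
    rw [hdiag] at h1
    exact h1
  -- spectrum regularity
  have hEdiag : ∀ (i : Fin (d + 1)) (u v : V), E i u u = E i v v := by
    intro i u v
    have hδ : W.mulVec (fun i => E i u u - E i v v) = 0 := by
      funext j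
      rw [Matrix.mulVec]
      by_cases hj : j = 0
      · subst hj
        show ∑ i, W 0 i * (E i u u - E i v v) = 0
        have h1 : ∑ i, W 0 i * (E i u u - E i v v) = ∑ i, (E i u u - E i v v) := by
          refine Finset.sum_congr rfl fun i _ => by rw [hW]; simp
        rw [h1, Finset.sum_sub_distrib, hrow0 u, hrow0 v, sub_self]
      · show ∑ i, W j i * (E i u u - E i v v) = 0
        have h1 : ∑ i, W j i * (E i u u - E i v v)
            = ∑ i, (lam i ^ (2 * (j : ℕ) - 1) * E i u u - lam i ^ (2 * (j : ℕ) - 1) * E i v v) := by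
          refine Finset.sum_congr rfl fun i _ => by rw [hW]; simp [hj]; ring
        rw [h1, Finset.sum_sub_distrib, hrowj j hj u, hrowj j hj v, sub_self]
    have h2 := Matrix.eq_zero_of_mulVec_eq_zero hdet hδ
    have h3 := congr_fun h2 i
    simpa [sub_eq_zero] using h3
  -- walk regularity
  have hwalk : ∀ (ℓ : ℕ) (u v : V), ((G.adjMatrix ℝ) ^ ℓ) u u = ((G.adjMatrix ℝ) ^ ℓ) v v := by
    intro ℓ u v
    rw [hdiag, hdiag]
    exact Finset.sum_congr rfl fun i _ => by rw [hEdiag i u v]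
  refine ⟨hEdiag, hwalk, ?_⟩
  obtain ⟨u0⟩ := hV
  refine ⟨G.degree u0, fun v => ?_⟩
  have h1 := hwalk 2 v u0
  rw [pow_two, SimpleGraph.adjMatrix_mul_self_apply_self, SimpleGraph.adjMatrix_mul_self_apply_self] at h1
  exact_mod_cast h1
end

section
/- Let Γ be a connected graph whose adjacency matrix has exactly d+1 distinct eigenvalues and whose odd-girth is at least 2d+1, with predistance polynomials p_0, ..., p_d satisfying the three-term recurrence x p_i = β_{i-1} p_{i-1} + α_i p_i + γ_{i+1} p_{i+1} (modulo the minimal polynomial of A). Then α_i = 0 for i = 0, 1, ..., d-1, each polynomial p_i is an even function if i is even and an odd function if i is odd, and α_d ≠ 0. -/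
open Matrix Finset Polynomial

section Aux

lemma comp_negX_coeff (f : ℝ[X]) (k : ℕ) : (f.comp (-X)).coeff k = (-1)^k * f.coeff k := by
  induction f using Polynomial.induction_on' with
  | add p q hp hq => simp [add_comp, hp, hq, mul_add]
  | monomial n a =>
    have : (-X : ℝ[X]) ^ n = C ((-1)^n) * X ^ n := by
      rw [neg_pow]; simp [C_pow]
    rw [monomial_comp, this, coeff_C_mul, coeff_C_mul, coeff_X_pow, coeff_monomial]
    rcases eq_or_ne n k with rfl | h
    · simp [mul_comm]
    · simp [h, Ne.symm h]

lemma even_coeff_eq_zero {f : ℝ[X]} (h : ∀ x : ℝ, f.eval (-x) = - f.eval x) {k : ℕ}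
    (hk : Even k) : f.coeff k = 0 := by
  have hc : f.comp (-X) = -f := by
    apply Polynomial.funext
    intro r
    simp [eval_comp, h r]
  have := congrArg (fun g => Polynomial.coeff g k) hc
  simp only [comp_negX_coeff, coeff_neg, hk.neg_one_pow, one_mul] at this
  linarith

lemma finrank_eigenspace_of_basis {K M n : Type*} [Field K] [DecidableEq K] [AddCommGroup M]
    [Module K M] [Fintype n] [DecidableEq n] (b : Module.Basis n K M) (f : Module.End K M) (w : n → K)
    (hw : ∀ j, f (b j) = w j • b j) (μ : K) :
    Module.finrank K (Module.End.eigenspace f μ) = Fintype.card {j // w j = μ} := by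
  have hspan : Module.End.eigenspace f μ = Submodule.span K (b '' {j | w j = μ}) := by
    apply le_antisymm
    · intro x hx
      rw [Module.End.mem_eigenspace_iff] at hx
      rw [Module.Basis.mem_span_image]
      intro j hj
      simp only [Finset.mem_coe, Finsupp.mem_support_iff] at hj
      by_contra hjs
      simp only [Set.mem_setOf_eq] at hjs
      have hfx : f x = ∑ i, (w i * b.repr x i) • b i := by
        conv_lhs => rw [← b.sum_repr x]
        rw [map_sum]
        simp only [_root_.map_smul, hw, smul_smul, mul_comm]
      have h1 : b.repr (f x) j = w j * b.repr x j := by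
        rw [hfx, map_sum]
        simp only [_root_.map_smul, Module.Basis.repr_self, Finsupp.smul_single, smul_eq_mul, mul_one]
        rw [Finsupp.finset_sum_apply]
        simp [Finsupp.single_apply, Finset.sum_ite_eq']
      have h2 : b.repr (f x) j = μ * b.repr x j := by
        rw [hx, _root_.map_smul]; simp
      exact hjs (mul_right_cancel₀ hj (h1.symm.trans h2))
    · rw [Submodule.span_le]
      rintro - ⟨j, hj, rfl⟩
      rw [SetLike.mem_coe, Module.End.mem_eigenspace_iff, hw, hj]
  rw [hspan]
  have hli : LinearIndependent K (fun j : {j // w j = μ} => b j) :=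
    b.linearIndependent.comp _ Subtype.coe_injective
  rw [Set.image_eq_range]
  exact finrank_span_eq_card hli

variable {V : Type*} [Fintype V] [DecidableEq V]

lemma conj_pow_aux (U D : Matrix V V ℝ) (h : star U * U = 1) (h2 : U * star U = 1) (ℓ : ℕ) :
    (U * D * star U) ^ ℓ = U * D ^ ℓ * star U := by
  induction ℓ with
  | zero => simpa using h2.symm
  | succ k ih =>
    rw [pow_succ, ih, pow_succ]
    simp only [Matrix.mul_assoc]
    rw [← Matrix.mul_assoc (star U) U, h, Matrix.one_mul]

lemma trace_pow {A : Matrix V V ℝ} (hA : A.IsHermitian) (ℓ : ℕ) :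
    Matrix.trace (A ^ ℓ) = ∑ i, hA.eigenvalues i ^ ℓ := by
  have h1 : star (hA.eigenvectorUnitary : Matrix V V ℝ) * (hA.eigenvectorUnitary : Matrix V V ℝ) = 1 :=
    Matrix.mem_unitaryGroup_iff'.mp hA.eigenvectorUnitary.2
  have h2 : (hA.eigenvectorUnitary : Matrix V V ℝ) * star (hA.eigenvectorUnitary : Matrix V V ℝ) = 1 :=
    Matrix.mem_unitaryGroup_iff.mp hA.eigenvectorUnitary.2
  have := congrArg (fun M : Matrix V V ℝ => Matrix.trace (M ^ ℓ)) hA.spectral_theorem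
  simp only [Unitary.conjStarAlgAut_apply, Unitary.coe_star] at this
  rw [this, conj_pow_aux _ _ h1 h2, Matrix.trace_mul_cycle, h1,
    Matrix.one_mul, Matrix.diagonal_pow, Matrix.trace_diagonal]
  simp

lemma spectrum_eq_range {A : Matrix V V ℝ} (hA : A.IsHermitian) :
    spectrum ℝ A = Set.range hA.eigenvalues := by
  have := congrArg (spectrum ℝ) hA.spectral_theorem
  rw [this, Unitary.conjStarAlgAut_apply, Unitary.spectrum_star_right_conjugate, spectrum_diagonal]
  ext x; simp [Set.mem_range]

lemma mult_eq {A : Matrix V V ℝ} (hA : A.IsHermitian) (μ : ℝ) :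
    Module.finrank ℝ (Module.End.eigenspace (Matrix.toLin' A) μ)
      = Fintype.card {j // hA.eigenvalues j = μ} := by
  classical
  let b : Module.Basis V ℝ (V → ℝ) :=
    hA.eigenvectorBasis.toBasis.map (WithLp.linearEquiv 2 ℝ (V → ℝ))
  have hb : ∀ j, b j = ⇑(hA.eigenvectorBasis j) := by
    intro j
    simp [b, Module.Basis.map_apply]
  have hev : ∀ j, Matrix.toLin' A (b j) = hA.eigenvalues j • b j := by
    intro j
    rw [hb j, Matrix.toLin'_apply, hA.mulVec_eigenvectorBasis]
  exact finrank_eigenspace_of_basis b (Matrix.toLin' A) hA.eigenvalues hev μ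

end Aux

/-- Let `G` be a connected graph whose adjacency matrix `A` has exactly `d + 1` distinct
eigenvalues `lam 0 > lam 1 > ⋯ > lam d`, with multiplicities `m i`, and whose odd-girth is
at least `2 * d + 1` (no odd cycle of length less than `2 * d + 1`, but some odd cycle
exists; cycles of odd length `ℓ` are detected by `trace (A ^ ℓ) > 0`). Let `p 0, …, p d`
be the predistance polynomials (the orthogonal polynomials of degree `i` for the scalar
product `⟨f, g⟩ = (1 / n) * ∑ i, m i * f (lam i) * g (lam i)`, normalized so that
`‖p i‖² = p i (lam 0)`), satisfying the three-term recurrence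
`x * p i = β (i-1) * p (i-1) + α i * p i + γ (i+1) * p (i+1)` modulo the minimal
polynomial of `A` (i.e. when evaluated at each eigenvalue), with the conventions
`β (-1) * p (-1) = 0` and `γ (d+1) * p (d+1) = 0`. Then `α i = 0` for `i = 0, …, d - 1`,
each `p i` is an even function if `i` is even and an odd function if `i` is odd, and
`α d ≠ 0`. -/
theorem recurrence_coefficients_of_odd_girth {V : Type*} [Fintype V] [DecidableEq V]
    (G : SimpleGraph V) [DecidableRel G.Adj] (d : ℕ)
    (lam : Fin (d + 1) → ℝ) (m : Fin (d + 1) → ℕ) (p : ℕ → Polynomial ℝ)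
    (α β γ : ℕ → ℝ)
    (hconn : G.Connected)
    (hanti : StrictAnti lam)
    (hspec : spectrum ℝ (G.adjMatrix ℝ) = Set.range lam)
    (hmult : ∀ i, m i = Module.finrank ℝ
      (Module.End.eigenspace (Matrix.toLin' (G.adjMatrix ℝ)) (lam i)))
    (hdeg : ∀ i ≤ d, (p i).degree = (i : ℕ))
    (horth : ∀ i ≤ d, ∀ j ≤ d, i ≠ j →
      (∑ r, (m r : ℝ) * (p i).eval (lam r) * (p j).eval (lam r)) / (Fintype.card V : ℝ) = 0)
    (hnorm : ∀ i ≤ d,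
      (∑ r, (m r : ℝ) * (p i).eval (lam r) * (p i).eval (lam r)) / (Fintype.card V : ℝ)
        = (p i).eval (lam 0))
    (hrec : ∀ i ≤ d, ∀ r : Fin (d + 1),
      lam r * (p i).eval (lam r) =
        (if i = 0 then 0 else β (i - 1) * (p (i - 1)).eval (lam r)) +
          α i * (p i).eval (lam r) +
          (if i = d then 0 else γ (i + 1) * (p (i + 1)).eval (lam r)))
    (hshort : ∀ ℓ : ℕ, Odd ℓ → ℓ < 2 * d + 1 → Matrix.trace (G.adjMatrix ℝ ^ ℓ) = 0)
    (hfinite : ∃ ℓ : ℕ, Odd ℓ ∧ 0 < Matrix.trace (G.adjMatrix ℝ ^ ℓ)) :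
    (∀ i < d, α i = 0) ∧
    (∀ i ≤ d, ∀ x : ℝ, (p i).eval (-x) = (-1 : ℝ) ^ i * (p i).eval x) ∧
    α d ≠ 0 := by
  classical
  have hA : (G.adjMatrix ℝ).IsHermitian := by
    show (G.adjMatrix ℝ)ᴴ = G.adjMatrix ℝ
    ext i j
    simp [Matrix.conjTranspose_apply, G.adj_comm i j]
  set eig := hA.eigenvalues with heig
  have hrange : Set.range eig = Set.range lam := by
    rw [← spectrum_eq_range hA, hspec]
  have hlaminj : Function.Injective lam := hanti.injective
  -- the fiber map
  have hgex : ∀ j : V, ∃ r : Fin (d+1), lam r = eig j := by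
    intro j
    have : eig j ∈ Set.range lam := by
      rw [← hrange]; exact Set.mem_range_self j
    exact this
  choose g hg using hgex
  have hmcard : ∀ r, m r = Fintype.card {j // eig j = lam r} := by
    intro r
    rw [hmult r, mult_eq hA (lam r)]
  have hgiff : ∀ (j : V) (r : Fin (d+1)), g j = r ↔ eig j = lam r := by
    intro j r
    constructor
    · rintro rfl; exact (hg j).symm
    · intro h; exact hlaminj ((hg j).trans h)
  -- the moment bridge
  have hS : ∀ ℓ : ℕ, ∑ r, (m r : ℝ) * lam r ^ ℓ = Matrix.trace (G.adjMatrix ℝ ^ ℓ) := by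
    intro ℓ
    rw [trace_pow hA ℓ]
    have hc : ∑ i : V, hA.eigenvalues i ^ ℓ = ∑ i : V, lam (g i) ^ ℓ :=
      Finset.sum_congr rfl (fun j _ => by rw [hg j])
    rw [hc, ← Finset.sum_fiberwise' Finset.univ g (fun r => lam r ^ ℓ)]
    apply Finset.sum_congr rfl
    intro r _
    rw [Finset.sum_const, nsmul_eq_mul]
    congr 1
    rw [hmcard r, Fintype.card_subtype]
    congr 1
    apply Finset.card_bij (fun a _ => a) (fun a ha => by
        simp only [Finset.mem_filter, Finset.mem_univ, true_and] at ha ⊢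
        exact (hgiff a r).mpr ha)
      (fun a _ b _ h => h)
      (fun b hb => ⟨b, by
        simp only [Finset.mem_filter, Finset.mem_univ, true_and] at hb ⊢
        exact (hgiff b r).mp hb, rfl⟩)
  have hn : (0:ℝ) < (Fintype.card V : ℝ) := by
    have : Nonempty V := hconn.nonempty
    exact_mod_cast Fintype.card_pos
  have hmpos : ∀ r, 0 < m r := by
    intro r
    rw [hmcard r]
    have hmem : lam r ∈ Set.range eig := by rw [hrange]; exact Set.mem_range_self r
    obtain ⟨j, hj⟩ := hmem
    exact Fintype.card_pos_iff.mpr ⟨⟨j, hj⟩⟩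
  set S : ℕ → ℝ := fun k => ∑ r, (m r : ℝ) * lam r ^ k with hSdef
  have hSsmall : ∀ k, Odd k → k < 2*d+1 → S k = 0 := by
    intro k hk hk2
    rw [hSdef]
    dsimp only
    rw [hS k]
    exact hshort k hk hk2
  have hsum : ∀ (f : ℝ[X]) (N : ℕ), f.natDegree < N →
      ∑ r, (m r : ℝ) * f.eval (lam r) = ∑ k ∈ Finset.range N, f.coeff k * S k := by
    intro f N hN
    calc ∑ r, (m r:ℝ) * f.eval (lam r)
        = ∑ r, ∑ k ∈ Finset.range N, f.coeff k * ((m r:ℝ) * lam r ^ k) := by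
          apply Finset.sum_congr rfl; intro r _
          rw [eval_eq_sum_range' hN, Finset.mul_sum]
          apply Finset.sum_congr rfl; intro k _; ring
      _ = ∑ k ∈ Finset.range N, ∑ r, f.coeff k * ((m r:ℝ) * lam r ^ k) := Finset.sum_comm
      _ = ∑ k ∈ Finset.range N, f.coeff k * S k := by
          apply Finset.sum_congr rfl; intro k _
          rw [← Finset.mul_sum]
  have hodd_eval : ∀ (f : ℝ[X]) (N : ℕ), f.natDegree < N →
      (∀ x : ℝ, f.eval (-x) = - f.eval x) → (∀ k, Odd k → k < N → S k = 0) →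
      ∑ r, (m r : ℝ) * f.eval (lam r) = 0 := by
    intro f N hN hoddf hSk
    rw [hsum f N hN]
    apply Finset.sum_eq_zero
    intro k hk
    rcases Nat.even_or_odd k with he | ho
    · rw [even_coeff_eq_zero hoddf he, zero_mul]
    · rw [hSk k ho (Finset.mem_range.mp hk), mul_zero]
  have hpne : ∀ i, i ≤ d → p i ≠ 0 := by
    intro i hi h0
    have hd := hdeg i hi
    rw [h0, degree_zero] at hd
    exact absurd hd (by simp)
  have hpdeg : ∀ i, i ≤ d → (p i).natDegree = i := fun i hi =>
    natDegree_eq_of_degree_eq_some (hdeg i hi)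
  have hvalpos : ∀ i, i ≤ d → 0 < (p i).eval (lam 0) := by
    intro i hi
    have hnn : ∀ r ∈ Finset.univ, (0:ℝ) ≤ (m r : ℝ) * (p i).eval (lam r) * (p i).eval (lam r) := by
      intro r _
      rw [mul_assoc]
      exact mul_nonneg (Nat.cast_nonneg _) (mul_self_nonneg _)
    have hsnn : 0 ≤ ∑ r, (m r:ℝ) * (p i).eval (lam r) * (p i).eval (lam r) :=
      Finset.sum_nonneg hnn
    rcases lt_or_eq_of_le hsnn with hlt | heq
    · rw [← hnorm i hi]
      exact div_pos hlt hn
    · exfalso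
      have hz : ∀ r ∈ Finset.univ, (m r:ℝ) * (p i).eval (lam r) * (p i).eval (lam r) = 0 :=
        (Finset.sum_eq_zero_iff_of_nonneg hnn).mp heq.symm
      have hev0 : ∀ r, (p i).eval (lam r) = 0 := by
        intro r
        have hzr := hz r (Finset.mem_univ r)
        have hm : (0:ℝ) < m r := by exact_mod_cast hmpos r
        rw [mul_assoc] at hzr
        rcases mul_eq_zero.mp hzr with h | h
        · exact absurd h (ne_of_gt hm)
        · exact mul_self_eq_zero.mp h
      apply hpne i hi
      apply Polynomial.eq_zero_of_natDegree_lt_card_of_eval_eq_zero (p i) hlaminj hev0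
      rw [hpdeg i hi, Fintype.card_fin]
      omega
  have halpha : ∀ i, i < d → (∀ x : ℝ, (p i).eval (-x) = (-1:ℝ)^i * (p i).eval x) → α i = 0 := by
    intro i hid hpari
    have hi : i ≤ d := hid.le
    have hne : i ≠ d := Nat.ne_of_lt hid
    have hcross : ∀ j, j ≤ d → j ≠ i →
        ∑ r, (m r:ℝ) * (p j).eval (lam r) * (p i).eval (lam r) = 0 := by
      intro j hj hji
      have h := horth j hj i hi hji
      rcases div_eq_zero_iff.mp h with h' | h'
      · exact h'
      · exact absurd h' (ne_of_gt hn)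
    have hmid : ∑ r, (m r:ℝ) * (p i).eval (lam r) * (p i).eval (lam r)
        = (p i).eval (lam 0) * (Fintype.card V:ℝ) :=
      (div_eq_iff (ne_of_gt hn)).mp (hnorm i hi)
    set B : ℝ := if i = 0 then 0 else β (i-1) with hB
    have e : ∀ r : Fin (d+1), (m r:ℝ) * ((X * (p i)^2).eval (lam r)) =
        B * ((m r:ℝ) * (p (i-1)).eval (lam r) * (p i).eval (lam r))
        + α i * ((m r:ℝ) * (p i).eval (lam r) * (p i).eval (lam r))
        + γ (i+1) * ((m r:ℝ) * (p (i+1)).eval (lam r) * (p i).eval (lam r)) := by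
      intro r
      have h := hrec i hi r
      rw [if_neg hne] at h
      simp only [eval_mul, eval_pow, eval_X]
      rcases eq_or_ne i 0 with h0 | h0
      · rw [if_pos h0] at h
        rw [hB, if_pos h0]
        linear_combination ((m r:ℝ) * (p i).eval (lam r)) * h
      · rw [if_neg h0] at h
        rw [hB, if_neg h0]
        linear_combination ((m r:ℝ) * (p i).eval (lam r)) * h
    have hsum2 : ∑ r, (m r:ℝ) * ((X * (p i)^2).eval (lam r)) =
        B * (∑ r, (m r:ℝ) * (p (i-1)).eval (lam r) * (p i).eval (lam r))
        + α i * (∑ r, (m r:ℝ) * (p i).eval (lam r) * (p i).eval (lam r))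
        + γ (i+1) * (∑ r, (m r:ℝ) * (p (i+1)).eval (lam r) * (p i).eval (lam r)) := by
      rw [Finset.sum_congr rfl (fun r _ => e r), Finset.sum_add_distrib, Finset.sum_add_distrib,
        ← Finset.mul_sum, ← Finset.mul_sum, ← Finset.mul_sum]
    have hLHS : ∑ r, (m r:ℝ) * ((X * (p i)^2).eval (lam r)) = 0 := by
      apply hodd_eval _ (2*d+1) ?_ ?_ hSsmall
      · calc (X * (p i)^2).natDegree ≤ X.natDegree + ((p i)^2).natDegree :=
              natDegree_mul_le
          _ ≤ 1 + 2 * i := by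
              rw [natDegree_pow, hpdeg i hi]
              have := natDegree_X_le (R := ℝ)
              omega
          _ < 2*d+1 := by omega
      · intro x
        have hsq : ((-1:ℝ)^i)^2 = 1 := by
          rw [← pow_mul, mul_comm, pow_mul]
          norm_num
        simp only [eval_mul, eval_pow, eval_X, hpari x, mul_pow, hsq]
        ring
    have hE1 : B * (∑ r, (m r:ℝ) * (p (i-1)).eval (lam r) * (p i).eval (lam r)) = 0 := by
      rcases eq_or_ne i 0 with h0 | h0
      · rw [hB, if_pos h0, zero_mul]
      · rw [hcross (i-1) (by omega) (by omega), mul_zero]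
    have hE3 : ∑ r, (m r:ℝ) * (p (i+1)).eval (lam r) * (p i).eval (lam r) = 0 :=
      hcross (i+1) (by omega) (by omega)
    rw [hLHS, hE1, hE3, hmid, mul_zero, add_zero, zero_add] at hsum2
    rcases mul_eq_zero.mp hsum2.symm with h | h
    · exact h
    · exact absurd h (ne_of_gt (mul_pos (hvalpos i hi) hn))
  have hpar : ∀ i, i ≤ d → ∀ x : ℝ, (p i).eval (-x) = (-1:ℝ)^i * (p i).eval x := by
    intro i
    induction i using Nat.strong_induction_on with
    | _ i ih =>
      intro hi x
      match i, hi with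
      | 0, hi =>
        obtain ⟨c, hc⟩ := Polynomial.natDegree_eq_zero.mp (hpdeg 0 (by omega))
        rw [← hc]
        simp
      | (k+1), hi =>
        have hkd : k < d := by omega
        have hpark : ∀ y : ℝ, (p k).eval (-y) = (-1:ℝ)^k * (p k).eval y :=
          fun y => ih k (by omega) (by omega) y
        have hak : α k = 0 := halpha k hkd hpark
        set q : ℝ[X] := X * p k - C (α k) * p k -
          (if k = 0 then 0 else C (β (k-1)) * p (k-1)) - C (γ (k+1)) * p (k+1) with hq
        have hqe : ∀ r, q.eval (lam r) = 0 := by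
          intro r
          have h := hrec k (by omega) r
          rw [if_neg (Nat.ne_of_lt hkd)] at h
          rw [hq]
          rcases eq_or_ne k 0 with h0 | h0
          · rw [if_pos h0] at h ⊢
            simp only [eval_sub, eval_mul, eval_X, eval_C, eval_zero]
            linarith [h]
          · rw [if_neg h0] at h ⊢
            simp only [eval_sub, eval_mul, eval_X, eval_C, eval_zero]
            linarith [h]
        have h1 : (X * p k).natDegree ≤ 1 + k := by
          calc (X * p k).natDegree ≤ X.natDegree + (p k).natDegree := natDegree_mul_le
            _ ≤ 1 + k := by
                have := natDegree_X_le (R := ℝ)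
                rw [hpdeg k (by omega)]
                omega
        have h2 : (C (α k) * p k).natDegree ≤ k := by
          calc _ ≤ (p k).natDegree := natDegree_C_mul_le _ _
            _ = k := hpdeg k (by omega)
        have h3 : ((if k = 0 then (0:ℝ[X]) else C (β (k-1)) * p (k-1))).natDegree ≤ k := by
          rcases eq_or_ne k 0 with h0 | h0
          · simp [h0]
          · rw [if_neg h0]
            calc _ ≤ (p (k-1)).natDegree := natDegree_C_mul_le _ _
              _ = k - 1 := hpdeg (k-1) (by omega)
              _ ≤ k := by omega
        have h4 : (C (γ (k+1)) * p (k+1)).natDegree ≤ k+1 := by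
          calc _ ≤ (p (k+1)).natDegree := natDegree_C_mul_le _ _
            _ = k+1 := hpdeg (k+1) (by omega)
        have hq0 : q = 0 := by
          apply Polynomial.eq_zero_of_natDegree_lt_card_of_eval_eq_zero q hlaminj hqe
          rw [Fintype.card_fin]
          refine Nat.lt_succ_of_le ?_
          apply le_trans (natDegree_sub_le _ _)
          apply max_le
          · apply le_trans (natDegree_sub_le _ _)
            apply max_le
            · apply le_trans (natDegree_sub_le _ _)
              apply max_le
              · exact le_trans h1 (by omega)
              · exact le_trans h2 (by omega)
            · exact le_trans h3 (by omega)
          · exact le_trans h4 (by omega)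
        have hγ : γ (k+1) ≠ 0 := by
          intro hγ0
          have hxp : X * p k = C (α k) * p k +
              (if k = 0 then 0 else C (β (k-1)) * p (k-1)) := by
            have hz := hq0
            rw [hq, hγ0, map_zero, zero_mul, sub_zero, sub_sub, sub_eq_zero] at hz
            exact hz
          have hL : (X * p k).natDegree = 1 + k := by
            rw [natDegree_mul X_ne_zero (hpne k (by omega)), natDegree_X, hpdeg k (by omega)]
          have hR : (C (α k) * p k +
              (if k = 0 then 0 else C (β (k-1)) * p (k-1))).natDegree ≤ k :=
            le_trans (natDegree_add_le _ _) (max_le h2 h3)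
          rw [hxp] at hL
          omega
        have hevy : ∀ y : ℝ, γ (k+1) * (p (k+1)).eval y =
            y * (p k).eval y - α k * (p k).eval y -
            (if k = 0 then 0 else β (k-1) * (p (k-1)).eval y) := by
          intro y
          have hcy := congrArg (Polynomial.eval y) hq0
          rw [hq] at hcy
          simp only [eval_sub, eval_mul, eval_X, eval_C, eval_zero,
            apply_ite (Polynomial.eval y)] at hcy
          rcases eq_or_ne k 0 with h0 | h0
          · rw [if_pos h0] at hcy ⊢
            linarith [hcy]
          · rw [if_neg h0] at hcy ⊢
            linarith [hcy]
        have hifpar : (if k = 0 then (0:ℝ) else β (k-1) * (p (k-1)).eval (-x)) =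
            (-1:ℝ)^(k+1) * (if k = 0 then 0 else β (k-1) * (p (k-1)).eval x) := by
          rcases eq_or_ne k 0 with h0 | h0
          · rw [if_pos h0, if_pos h0, mul_zero]
          · obtain ⟨j, rfl⟩ := Nat.exists_eq_succ_of_ne_zero h0
            rw [if_neg h0, if_neg h0]
            have hjd : j + 1 - 1 = j := by omega
            rw [hjd]
            have hpj := ih j (by omega) (by omega) x
            rw [hpj, pow_succ, pow_succ]
            ring
        have hstep : γ (k+1) * (p (k+1)).eval (-x) =
            (-1:ℝ)^(k+1) * (γ (k+1) * (p (k+1)).eval x) := by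
          rw [hevy (-x), hpark x, hak, hifpar, hevy x, hak, pow_succ]
          ring
        apply mul_left_cancel₀ hγ
        rw [hstep]
        ring
  refine ⟨fun i hi => halpha i hi (hpar i hi.le), hpar, ?_⟩
  intro hαd
  set Q : ℝ[X] := X * p d - C (α d) * p d -
    (if d = 0 then 0 else C (β (d-1)) * p (d-1)) with hQ
  have hQe : ∀ r, Q.eval (lam r) = 0 := by
    intro r
    have h := hrec d le_rfl r
    rw [if_pos rfl] at h
    rw [hQ]
    rcases eq_or_ne d 0 with h0 | h0
    · rw [if_pos h0] at h ⊢
      simp only [eval_sub, eval_mul, eval_X, eval_C, eval_zero]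
      linarith [h]
    · rw [if_neg h0] at h ⊢
      simp only [eval_sub, eval_mul, eval_X, eval_C, eval_zero]
      linarith [h]
  have hQdeg : Q.natDegree ≤ d + 1 := by
    apply le_trans (natDegree_sub_le _ _)
    apply max_le
    · apply le_trans (natDegree_sub_le _ _)
      apply max_le
      · calc (X * p d).natDegree ≤ X.natDegree + (p d).natDegree := natDegree_mul_le
          _ ≤ d + 1 := by
              have := natDegree_X_le (R := ℝ)
              rw [hpdeg d le_rfl]
              omega
      · calc (C (α d) * p d).natDegree ≤ (p d).natDegree := natDegree_C_mul_le _ _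
          _ ≤ d + 1 := by rw [hpdeg d le_rfl]; omega
    · rcases eq_or_ne d 0 with h0 | h0
      · simp [h0]
      · rw [if_neg h0]
        calc (C (β (d-1)) * p (d-1)).natDegree ≤ (p (d-1)).natDegree := natDegree_C_mul_le _ _
          _ ≤ d + 1 := by rw [hpdeg (d-1) (by omega)]; omega
  have hcne : (p d).coeff d ≠ 0 := by
    have hlc : (p d).leadingCoeff ≠ 0 := leadingCoeff_ne_zero.mpr (hpne d le_rfl)
    rwa [Polynomial.leadingCoeff, hpdeg d le_rfl] at hlc
  have hcQ : Q.coeff (d+1) = (p d).coeff d := by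
    rw [hQ]
    simp only [coeff_sub]
    rw [coeff_X_mul]
    have e2 : (C (α d) * p d).coeff (d+1) = 0 :=
      coeff_eq_zero_of_natDegree_lt (lt_of_le_of_lt (natDegree_C_mul_le _ _)
        (by rw [hpdeg d le_rfl]; omega))
    have e3 : (if d = 0 then (0:ℝ[X]) else C (β (d-1)) * p (d-1)).coeff (d+1) = 0 := by
      rcases eq_or_ne d 0 with h0 | h0
      · simp [h0]
      · rw [if_neg h0]
        exact coeff_eq_zero_of_natDegree_lt (lt_of_le_of_lt (natDegree_C_mul_le _ _)
          (by rw [hpdeg (d-1) (by omega)]; omega))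
    rw [e2, e3]
    ring
  have hQodd : ∀ x : ℝ, Q.eval (-x) = (-1:ℝ)^(d+1) * Q.eval x := by
    intro x
    have hifpar : (if d = 0 then (0:ℝ[X]) else C (β (d-1)) * p (d-1)).eval (-x) =
        (-1:ℝ)^(d+1) * (if d = 0 then (0:ℝ[X]) else C (β (d-1)) * p (d-1)).eval x := by
      rcases eq_or_ne d 0 with h0 | h0
      · rw [if_pos h0]
        simp
      · obtain ⟨j, rfl⟩ := Nat.exists_eq_succ_of_ne_zero h0
        rw [if_neg h0]
        have hjd : j + 1 - 1 = j := by omega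
        rw [hjd]
        simp only [eval_mul, eval_C]
        rw [hpar j (by omega) x, pow_succ, pow_succ]
        ring
    rw [hQ]
    simp only [eval_sub, eval_mul, eval_X, eval_C]
    rw [hifpar, hpar d le_rfl x, hαd, pow_succ]
    ring
  have hSall : ∀ j, Odd j → S j = 0 := by
    intro j
    induction j using Nat.strong_induction_on with
    | _ j ih =>
      intro hjodd
      by_cases hjlt : j < 2*d+1
      · exact hSsmall j hjodd hjlt
      push_neg at hjlt
      have hjd : d + 1 ≤ j := by omega
      set c := (p d).coeff d with hcdef
      set f : ℝ[X] := X^j - C c⁻¹ * (X^(j - (d+1)) * Q) with hf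
      have hfe : ∀ r, f.eval (lam r) = lam r ^ j := by
        intro r
        rw [hf]
        simp [hQe r]
      have hfodd : ∀ x : ℝ, f.eval (-x) = - f.eval x := by
        intro x
        rw [hf]
        simp only [eval_sub, eval_mul, eval_pow, eval_X, eval_C, hQodd x]
        rw [hjodd.neg_pow x]
        have hsign : (-1:ℝ)^(j-(d+1)) * (-1:ℝ)^(d+1) = -1 := by
          rw [← pow_add]
          have harith : j - (d+1) + (d+1) = j := by omega
          rw [harith, hjodd.neg_one_pow]
        rw [neg_pow]
        linear_combination (-(c⁻¹ * x ^ (j - (d+1)) * Polynomial.eval x Q)) * hsign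
      have hfdeg : f.natDegree < j := by
        have hub : f.natDegree ≤ j := by
          apply le_trans (natDegree_sub_le _ _)
          apply max_le (natDegree_X_pow_le j)
          calc (C c⁻¹ * (X^(j-(d+1)) * Q)).natDegree ≤ (X^(j-(d+1)) * Q).natDegree :=
                natDegree_C_mul_le _ _
            _ ≤ (X^(j-(d+1)) : ℝ[X]).natDegree + Q.natDegree := natDegree_mul_le
            _ ≤ (j - (d+1)) + (d+1) := by
                rw [natDegree_X_pow]
                omega
            _ = j := by omega
        have hcoeffj : f.coeff j = 0 := by
          rw [hf, coeff_sub, coeff_X_pow, if_pos rfl, coeff_C_mul]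
          have hXQ : ((X:ℝ[X])^(j-(d+1)) * Q).coeff j = Q.coeff (d+1) := by
            have hcp := Polynomial.coeff_X_pow_mul Q (j-(d+1)) (d+1)
            rwa [show (d+1) + (j-(d+1)) = j by omega] at hcp
          rw [hXQ, hcQ, inv_mul_cancel₀ hcne]
          ring
        rcases eq_or_ne f 0 with h0 | h0
        · rw [h0, natDegree_zero]
          exact hjodd.pos
        · apply lt_of_le_of_ne hub
          intro hEq
          exact h0 (leadingCoeff_eq_zero.mp (by rw [Polynomial.leadingCoeff, hEq]; exact hcoeffj))
      have hz := hodd_eval f j hfdeg hfodd (fun k hk hkj => ih k hkj hk)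
      rw [hSdef]
      dsimp only
      calc ∑ r, (m r:ℝ) * lam r ^ j = ∑ r, (m r:ℝ) * f.eval (lam r) :=
            Finset.sum_congr rfl (fun r _ => by rw [hfe r])
        _ = 0 := hz
  obtain ⟨ℓ, hℓodd, hℓpos⟩ := hfinite
  have h0 := hSall ℓ hℓodd
  rw [hSdef] at h0
  dsimp only at h0
  rw [hS ℓ] at h0
  linarith
end

section
/- Let Γ be a connected graph whose adjacency matrix A has exactly d+1 distinct eigenvalues λ_0 > λ_1 > ... > λ_d and whose odd-girth is at least 2d+1. Then there exist constants α_0 = 1, α_1, ..., α_d (independent of the vertex) such that m_u(λ_i) = α_i m_u(λ_0) for every vertex u and every i = 0, 1, ..., d; consequently m_u(λ_i) = α_i / (Σ_{j=0}^d α_j) for every vertex u. -/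
open Matrix Finset

/-- Let `G` be a connected graph whose adjacency matrix `A` has exactly `d + 1` distinct
eigenvalues `lam 0 > lam 1 > ⋯ > lam d`, with principal idempotents `E i` (the symmetric
pairwise-orthogonal idempotents summing to the identity with `A = ∑ i, lam i • E i`; i.e.
`E i` is the orthogonal projection onto `Ker (A - lam i • 1)`), and whose odd-girth is at
least `2 * d + 1` (the graph has no odd cycle of length less than `2 * d + 1`, but has
some odd cycle; cycles of odd length `ℓ` are detected by `trace (A ^ ℓ) > 0`). Then there
are constants `α i` with `α 0 = 1`, independent of the vertex, such that the local
multiplicities `m_u (lam i) = E i u u` satisfy `m_u (lam i) = α i * m_u (lam 0)` for every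
vertex `u`; consequently `m_u (lam i) = α i / (∑ j, α j)` for every vertex `u`. -/
theorem local_multiplicities_proportional {V : Type*} [Fintype V] [DecidableEq V]
    (G : SimpleGraph V) [DecidableRel G.Adj] (d : ℕ)
    (lam : Fin (d + 1) → ℝ) (E : Fin (d + 1) → Matrix V V ℝ)
    (hconn : G.Connected)
    (hanti : StrictAnti lam)
    (hspec : spectrum ℝ (G.adjMatrix ℝ) = Set.range lam)
    (hsum : ∑ i, E i = 1)
    (hprod : ∀ i j, E i * E j = if i = j then E i else 0)
    (hsymm : ∀ i, (E i).IsSymm)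
    (hdecomp : G.adjMatrix ℝ = ∑ i, lam i • E i)
    (hshort : ∀ ℓ : ℕ, Odd ℓ → ℓ < 2 * d + 1 → Matrix.trace (G.adjMatrix ℝ ^ ℓ) = 0)
    (hfinite : ∃ ℓ : ℕ, Odd ℓ ∧ 0 < Matrix.trace (G.adjMatrix ℝ ^ ℓ)) :
    ∃ α : Fin (d + 1) → ℝ, α 0 = 1 ∧
      (∀ (u : V) (i : Fin (d + 1)), E i u u = α i * E 0 u u) ∧
      (∀ (u : V) (i : Fin (d + 1)), E i u u = α i / (∑ j, α j)) := by
  set A := G.adjMatrix ℝ with hA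
  -- product of linear combinations of the idempotents
  have hmulE : ∀ f g : Fin (d+1) → ℝ,
      (∑ i, f i • E i) * (∑ j, g j • E j) = ∑ i, (f i * g i) • E i := by
    intro f g
    rw [Finset.sum_mul]
    refine Finset.sum_congr rfl fun i _ => ?_
    rw [Finset.mul_sum]
    rw [Finset.sum_eq_single i]
    · rw [smul_mul_smul_comm, hprod i i, if_pos rfl]
    · intro j _ hji
      rw [smul_mul_smul_comm, hprod i j, if_neg (fun h => hji h.symm), smul_zero]
    · intro h; exact absurd (Finset.mem_univ i) h
  -- powers of A
  have hpow : ∀ k : ℕ, A ^ k = ∑ i, (lam i ^ k) • E i := by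
    intro k
    induction k with
    | zero => simp [hsum]
    | succ k ih =>
      rw [pow_succ, ih, hdecomp, hmulE]
      exact Finset.sum_congr rfl fun i _ => by rw [← pow_succ]
  -- entries of powers of A are nonnegative
  have hApos : ∀ (ℓ : ℕ) (u v : V), 0 ≤ (A ^ ℓ) u v := by
    intro ℓ
    induction ℓ with
    | zero =>
      intro u v
      rw [pow_zero, Matrix.one_apply]
      split <;> norm_num
    | succ k ih =>
      intro u v
      rw [pow_succ, Matrix.mul_apply]
      refine Finset.sum_nonneg fun w _ => mul_nonneg (ih u w) ?_
      rw [hA, SimpleGraph.adjMatrix_apply]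
      split <;> norm_num
  -- diagonal entries of odd short powers vanish
  have hdiag0 : ∀ ℓ : ℕ, Odd ℓ → ℓ < 2*d+1 → ∀ u : V, (A ^ ℓ) u u = 0 := by
    intro ℓ ho hl u
    have h1 : ∑ v : V, (A ^ ℓ) v v = 0 := by
      have := hshort ℓ ho hl
      simpa [Matrix.trace, Matrix.diag] using this
    exact (Finset.sum_eq_zero_iff_of_nonneg (fun v _ => hApos ℓ v v)).mp h1 u (Finset.mem_univ u)
  obtain ⟨ℓ₀, hℓ₀odd, hℓ₀pos⟩ := hfinite
  -- V is nonempty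
  have hV : Nonempty V := by
    by_contra h
    rw [not_nonempty_iff] at h
    have : Matrix.trace (A ^ ℓ₀) = 0 := by simp [Matrix.trace]
    rw [this] at hℓ₀pos
    exact lt_irrefl _ hℓ₀pos
  have hcard : 0 < (Fintype.card V : ℝ) := by
    have := Fintype.card_pos_iff.mpr hV
    exact_mod_cast this
  have heodd : ∀ k : ℕ, k ≠ 0 → Odd (2*k - 1) := by
    intro k hk
    rw [Nat.odd_iff]; omega
  -- the (d+1) × (d+1) coefficient matrix
  set N : Matrix (Fin (d+1)) (Fin (d+1)) ℝ :=
    Matrix.of (fun k i : Fin (d+1) => lam i ^ (2 * (k:ℕ) - 1)) with hN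
  have hdetN : IsUnit N.det := by
    rw [isUnit_iff_ne_zero]
    intro hdet
    obtain ⟨v, hvne, hv⟩ := Matrix.exists_vecMul_eq_zero_iff.mpr hdet
    have hrel : ∀ i, ∑ k : Fin (d+1), v k * lam i ^ (2*(k:ℕ)-1) = 0 := by
      intro i
      have := congrFun hv i
      simpa [Matrix.vecMul, dotProduct, hN] using this
    have hS : ∑ k : Fin (d+1), v k • A ^ (2*(k:ℕ)-1) = 0 := by
      calc ∑ k : Fin (d+1), v k • A ^ (2*(k:ℕ)-1)
          = ∑ k : Fin (d+1), ∑ i, (v k * lam i ^ (2*(k:ℕ)-1)) • E i := by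
            refine Finset.sum_congr rfl fun k _ => ?_
            rw [hpow, Finset.smul_sum]
            exact Finset.sum_congr rfl fun i _ => smul_smul _ _ _
        _ = ∑ i, (∑ k : Fin (d+1), v k * lam i ^ (2*(k:ℕ)-1)) • E i := by
            rw [Finset.sum_comm]
            exact Finset.sum_congr rfl fun i _ => (Finset.sum_smul).symm
        _ = 0 := by
            refine Finset.sum_eq_zero fun i _ => ?_
            rw [hrel i, zero_smul]
    have htr : ∀ m : ℕ,
        ∑ k : Fin (d+1), v k * Matrix.trace (A ^ (m + (2*(k:ℕ)-1))) = 0 := by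
      intro m
      have h2 : A ^ m * (∑ k : Fin (d+1), v k • A ^ (2*(k:ℕ)-1)) = 0 := by
        rw [hS, mul_zero]
      rw [Finset.mul_sum] at h2
      have h3 : ∑ k : Fin (d+1), v k • A ^ (m + (2*(k:ℕ)-1)) = 0 := by
        rw [← h2]
        refine Finset.sum_congr rfl fun k _ => ?_
        rw [mul_smul_comm, pow_add]
      calc ∑ k : Fin (d+1), v k * Matrix.trace (A ^ (m + (2*(k:ℕ)-1)))
          = Matrix.trace (∑ k : Fin (d+1), v k • A ^ (m + (2*(k:ℕ)-1))) := by
            rw [Matrix.trace_sum]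
            exact Finset.sum_congr rfl fun k _ => by rw [Matrix.trace_smul, smul_eq_mul]
        _ = 0 := by rw [h3, Matrix.trace_zero]
    have hv0 : v 0 = 0 := by
      have h0 := htr 0
      rw [Finset.sum_eq_single (0 : Fin (d+1))] at h0
      · simp only [Fin.val_zero, Nat.mul_zero, Nat.zero_sub, Nat.zero_add, pow_zero,
          Matrix.trace_one] at h0
        have := mul_eq_zero.mp h0
        rcases this with h | h
        · exact h
        · exact absurd h (ne_of_gt hcard)
      · intro k _ hk
        have hkn : (k:ℕ) ≠ 0 := fun h => hk (Fin.ext h)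
        have hlt : 0 + (2*(k:ℕ)-1) < 2*d+1 := by
          have := k.isLt; omega
        have ho : Odd (0 + (2*(k:ℕ)-1)) := by
          rw [Nat.zero_add]; exact heodd _ hkn
        rw [hshort _ ho hlt, mul_zero]
      · intro h; exact absurd (Finset.mem_univ _) h
    -- maximal index in the support of v
    have hsupp : (Finset.univ.filter (fun k => v k ≠ 0)).Nonempty := by
      obtain ⟨k, hk⟩ := Function.ne_iff.mp hvne
      exact ⟨k, Finset.mem_filter.mpr ⟨Finset.mem_univ _, hk⟩⟩
    set K := (Finset.univ.filter (fun k => v k ≠ 0)).max' hsupp with hKdef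
    have hvK : v K ≠ 0 :=
      (Finset.mem_filter.mp ((Finset.univ.filter (fun k => v k ≠ 0)).max'_mem hsupp)).2
    have hKmax : ∀ k, v k ≠ 0 → k ≤ K := by
      intro k hk
      exact Finset.le_max' (Finset.univ.filter (fun j => v j ≠ 0)) k
        (Finset.mem_filter.mpr ⟨Finset.mem_univ _, hk⟩)
    have hKne : (K:ℕ) ≠ 0 := by
      intro h
      exact hvK ((Fin.ext h : K = 0) ▸ hv0)
    have hall : ∀ ℓ : ℕ, Odd ℓ → Matrix.trace (A ^ ℓ) = 0 := by
      intro ℓ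
      induction ℓ using Nat.strong_induction_on with
      | _ ℓ ih =>
        intro hℓ
        by_cases hlt : ℓ < 2*d+1
        · exact hshort ℓ hℓ hlt
        · push_neg at hlt
          have hKd : (K:ℕ) < d + 1 := K.isLt
          have hKℓ : 2*(K:ℕ)-1 ≤ ℓ := by omega
          have h0 := htr (ℓ - (2*(K:ℕ)-1))
          rw [Finset.sum_eq_single K] at h0
          · have hmℓ : ℓ - (2*(K:ℕ)-1) + (2*(K:ℕ)-1) = ℓ := by omega
            rw [hmℓ] at h0
            exact (mul_eq_zero.mp h0).resolve_left hvK
          · intro k _ hkK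
            rcases eq_or_ne (v k) 0 with h | h
            · rw [h, zero_mul]
            · have hkK' : k < K := lt_of_le_of_ne (hKmax k h) hkK
              have hk0 : (k:ℕ) ≠ 0 := by
                intro h0'
                exact h ((Fin.ext h0' : k = 0) ▸ hv0)
              have hkKn : (k:ℕ) < (K:ℕ) := hkK'
              have hlt' : ℓ - (2*(K:ℕ)-1) + (2*(k:ℕ)-1) < ℓ := by omega
              have hodd' : Odd (ℓ - (2*(K:ℕ)-1) + (2*(k:ℕ)-1)) := by
                rw [Nat.odd_iff] at hℓ ⊢; omega
              rw [ih _ hlt' hodd', mul_zero]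
          · intro h; exact absurd (Finset.mem_univ _) h
    rw [hall ℓ₀ hℓ₀odd] at hℓ₀pos
    exact lt_irrefl _ hℓ₀pos
  -- the diagonal vector of the idempotents solves a fixed linear system
  have hkey : ∀ u : V, (fun i => E i u u) = N⁻¹ *ᵥ (Pi.single (0 : Fin (d+1)) (1:ℝ)) := by
    intro u
    have h1 : N *ᵥ (fun i => E i u u) = Pi.single (0 : Fin (d+1)) (1:ℝ) := by
      funext k
      have hmv : (N *ᵥ (fun i => E i u u)) k = ∑ i, lam i ^ (2*(k:ℕ)-1) * E i u u := by
        rw [Matrix.mulVec, dotProduct]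
        rfl
      by_cases hk : k = 0
      · subst hk
        rw [hmv]
        have h2 : ∑ i, lam i ^ (2*((0:Fin (d+1)):ℕ)-1) * E i u u = ∑ i, E i u u := by
          refine Finset.sum_congr rfl fun i _ => ?_
          norm_num
        rw [h2]
        have h3 : ∑ i, E i u u = 1 := by
          have := congrFun (congrFun (congrArg (fun M => M) hsum) u) u
          simpa [Matrix.sum_apply, Matrix.one_apply] using congrFun (congrFun hsum u) u
        rw [h3, Pi.single_eq_same]
      · rw [hmv]
        have hkn : (k:ℕ) ≠ 0 := fun h => hk (Fin.ext h)
        have h4 : ∑ i, lam i ^ (2*(k:ℕ)-1) * E i u u = (A ^ (2*(k:ℕ)-1)) u u := by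
          rw [hpow]
          rw [Matrix.sum_apply]
          exact Finset.sum_congr rfl fun i _ => by rw [Matrix.smul_apply, smul_eq_mul]
        rw [h4, hdiag0 _ (heodd _ hkn) (by have := k.isLt; omega) u,
          Pi.single_eq_of_ne hk]
    calc (fun i => E i u u)
        = (N⁻¹ * N) *ᵥ (fun i => E i u u) := by
          rw [Matrix.nonsing_inv_mul N hdetN, Matrix.one_mulVec]
      _ = N⁻¹ *ᵥ (N *ᵥ (fun i => E i u u)) := (Matrix.mulVec_mulVec _ _ _).symm
      _ = N⁻¹ *ᵥ (Pi.single (0 : Fin (d+1)) (1:ℝ)) := by rw [h1]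
  set mv : Fin (d+1) → ℝ := N⁻¹ *ᵥ (Pi.single (0 : Fin (d+1)) (1:ℝ)) with hmv
  have hm : ∀ (u : V) (i : Fin (d+1)), E i u u = mv i := fun u i => congrFun (hkey u) i
  obtain ⟨u₀⟩ := hV
  have hsum1 : ∑ i, mv i = 1 := by
    have h3 : ∑ i, E i u₀ u₀ = 1 := by
      simpa [Matrix.sum_apply, Matrix.one_apply] using congrFun (congrFun hsum u₀) u₀
    rw [← h3]
    exact Finset.sum_congr rfl fun i _ => (hm u₀ i).symm
  -- E 0 is nonzero
  have hE0 : E 0 ≠ 0 := by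
    intro hE
    have hmem : lam 0 ∈ spectrum ℝ A := by
      rw [hspec]; exact Set.mem_range_self 0
    have halg : algebraMap ℝ (Matrix V V ℝ) (lam 0) = lam 0 • 1 := by
      rw [Matrix.algebraMap_eq_diagonal, Matrix.smul_one_eq_diagonal]
      rfl
    have h1 : lam 0 • (1 : Matrix V V ℝ) - A = ∑ i, (lam 0 - lam i) • E i := by
      rw [hdecomp, ← hsum, Finset.smul_sum, ← Finset.sum_sub_distrib]
      exact Finset.sum_congr rfl fun i _ => (sub_smul _ _ _).symm
    set B : Matrix V V ℝ :=
      ∑ i, (if i = 0 then 0 else (lam 0 - lam i)⁻¹) • E i with hB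
    have hcoef : ∀ i : Fin (d+1),
        ((lam 0 - lam i) * (if i = 0 then 0 else (lam 0 - lam i)⁻¹)) • E i = E i := by
      intro i
      by_cases hi : i = 0
      · subst hi; rw [hE]; simp
      · rw [if_neg hi]
        have hpos : lam i < lam 0 := hanti (Fin.pos_of_ne_zero hi)
        rw [mul_inv_cancel₀ (by linarith), one_smul]
    have hmul1 : (lam 0 • (1 : Matrix V V ℝ) - A) * B = 1 := by
      rw [h1, hB, hmulE, ← hsum]
      exact Finset.sum_congr rfl fun i _ => hcoef i
    have hmul2 : B * (lam 0 • (1 : Matrix V V ℝ) - A) = 1 := by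
      rw [h1, hB, hmulE, ← hsum]
      refine Finset.sum_congr rfl fun i _ => ?_
      rw [mul_comm]
      exact hcoef i
    have hunit : IsUnit (algebraMap ℝ (Matrix V V ℝ) (lam 0) - A) := by
      rw [halg]
      exact ⟨⟨lam 0 • (1 : Matrix V V ℝ) - A, B, hmul1, hmul2⟩, rfl⟩
    exact (spectrum.notMem_iff.mpr hunit) hmem
  -- trace of E 0 is positive
  have htrE0 : 0 < Matrix.trace (E 0) := by
    have heq : Matrix.trace (E 0) = ∑ u : V, ∑ v : V, (E 0 u v)^2 := by
      have h1 : E 0 = E 0 * E 0 := by rw [hprod 0 0, if_pos rfl]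
      conv_lhs => rw [h1]
      rw [Matrix.trace]
      refine Finset.sum_congr rfl fun u _ => ?_
      rw [Matrix.diag_apply, Matrix.mul_apply]
      refine Finset.sum_congr rfl fun v _ => ?_
      have hsv : E 0 v u = E 0 u v := by
        conv_lhs => rw [← (hsymm 0)]
        rfl
      rw [hsv, sq]
    obtain ⟨u, v, huv⟩ : ∃ u v, E 0 u v ≠ 0 := by
      by_contra h
      push_neg at h
      exact hE0 (by ext u v; exact h u v)
    rw [heq]
    refine Finset.sum_pos' (fun w _ => Finset.sum_nonneg fun x _ => sq_nonneg _)
      ⟨u, Finset.mem_univ u, ?_⟩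
    refine Finset.sum_pos' (fun x _ => sq_nonneg _)
      ⟨v, Finset.mem_univ v, ?_⟩
    exact lt_of_le_of_ne (sq_nonneg _) (Ne.symm (pow_ne_zero 2 huv))
  have hm0 : mv 0 ≠ 0 := by
    intro h
    have : Matrix.trace (E 0) = 0 := by
      rw [Matrix.trace]
      refine Finset.sum_eq_zero fun u _ => ?_
      rw [Matrix.diag_apply, hm u 0, h]
    rw [this] at htrE0
    exact lt_irrefl _ htrE0
  refine ⟨fun i => mv i / mv 0, div_self hm0, ?_, ?_⟩
  · intro u i
    rw [hm u i, hm u 0, div_mul_cancel₀ _ hm0]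
  · intro u i
    have hsa : ∑ j, mv j / mv 0 = 1 / mv 0 := by
      rw [← Finset.sum_div, hsum1]
    rw [hm u i, hsa]
    field_simp
end

section
/- Let Γ be a connected graph whose adjacency matrix A has exactly d+1 distinct eigenvalues and whose odd-girth is at least 2d+1, with predistance polynomials p_0, ..., p_d. Then for all vertices u, v and every i = 0, 1, ..., d, if dist(u,v) and i have different parity, then (p_i(A))_{uv} = 0. -/
open Matrix Finset Polynomial

private lemma aux_span (P : ℕ → Polynomial ℝ) (hdegP : ∀ j, (P j).degree = j) :
    ∀ (i : ℕ) (q : Polynomial ℝ), q.degree < (i : ℕ) →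
      ∃ c : ℕ → ℝ, q = ∑ j ∈ Finset.range i, Polynomial.C (c j) * P j := by
  intro i
  induction i with
  | zero =>
    intro q hq
    have hq0 : q = 0 := by
      rw [← Polynomial.degree_eq_bot]
      exact Nat.WithBot.lt_zero_iff.mp (by exact_mod_cast hq)
    exact ⟨0, by simp [hq0]⟩
  | succ i ih =>
    intro q hq
    by_cases h0 : q.degree < (i : ℕ)
    · obtain ⟨c, hc⟩ := ih q h0
      refine ⟨Function.update c i 0, ?_⟩
      rw [Finset.sum_range_succ, Function.update_self, map_zero, zero_mul, add_zero, hc]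
      exact Finset.sum_congr rfl fun j hj => by
        rw [Function.update_of_ne (Nat.ne_of_lt (Finset.mem_range.mp hj))]
    · have hq0 : q ≠ 0 := by
        intro h
        apply h0
        rw [h, Polynomial.degree_zero]
        exact WithBot.bot_lt_coe _
      have hnd : q.natDegree = i := by
        have h1 : q.natDegree < i + 1 :=
          (Polynomial.natDegree_lt_iff_degree_lt hq0).mpr (by exact_mod_cast hq)
        have h2 : ¬ q.natDegree < i := fun h =>
          h0 ((Polynomial.natDegree_lt_iff_degree_lt hq0).mp h)
        omega
      have hdq : q.degree = (i : ℕ) := by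
        rw [Polynomial.degree_eq_natDegree hq0, hnd]
      have hPne : P i ≠ 0 := by
        intro h
        have := hdegP i
        rw [h, Polynomial.degree_zero] at this
        exact absurd this (by simp)
      have hPlc : (P i).leadingCoeff ≠ 0 := Polynomial.leadingCoeff_ne_zero.mpr hPne
      have hqlc : q.leadingCoeff ≠ 0 := Polynomial.leadingCoeff_ne_zero.mpr hq0
      set a : ℝ := q.leadingCoeff / (P i).leadingCoeff with ha
      have ha0 : a ≠ 0 := div_ne_zero hqlc hPlc
      have hdegCa : (Polynomial.C a * P i).degree = q.degree := by
        rw [Polynomial.degree_C_mul ha0, hdegP i, hdq]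
      have hlc : (Polynomial.C a * P i).leadingCoeff = q.leadingCoeff := by
        rw [Polynomial.leadingCoeff_mul, Polynomial.leadingCoeff_C, ha,
          div_mul_cancel₀ _ hPlc]
      have hsub : (q - Polynomial.C a * P i).degree < (i : ℕ) := by
        have := Polynomial.degree_sub_lt hdegCa.symm hq0 hlc.symm
        rwa [hdq] at this
      obtain ⟨c, hc⟩ := ih _ hsub
      refine ⟨Function.update c i a, ?_⟩
      rw [Finset.sum_range_succ, Function.update_self]
      have hsum : ∑ j ∈ Finset.range i, Polynomial.C (Function.update c i a j) * P j
          = ∑ j ∈ Finset.range i, Polynomial.C (c j) * P j :=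
        Finset.sum_congr rfl fun j hj => by
          rw [Function.update_of_ne (Nat.ne_of_lt (Finset.mem_range.mp hj))]
      rw [hsum, ← hc]
      ring

/-- Let `G` be a connected graph whose adjacency matrix `A` has exactly `d + 1` distinct
eigenvalues `lam 0 > lam 1 > ⋯ > lam d`, with multiplicities `m i`, and whose odd-girth is
at least `2 * d + 1` (no odd cycle of length less than `2 * d + 1`, but some odd cycle
exists; cycles of odd length `ℓ` are detected by `trace (A ^ ℓ) > 0`). Let `p i` be the
predistance polynomials: the orthogonal polynomials of degree `i` for the scalar product
`⟨f, g⟩ = (1 / n) * ∑ i, m i * f (lam i) * g (lam i)`, normalized so that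
`‖p i‖² = p i (lam 0)`. Then for all vertices `u, v` and every `i = 0, …, d`, if
`dist u v` and `i` have different parity, then `(p i (A)) u v = 0`. -/
theorem predistance_parity_entries {V : Type*} [Fintype V] [DecidableEq V]
    (G : SimpleGraph V) [DecidableRel G.Adj] (d : ℕ)
    (lam : Fin (d + 1) → ℝ) (m : Fin (d + 1) → ℕ) (p : Fin (d + 1) → Polynomial ℝ)
    (hconn : G.Connected)
    (hanti : StrictAnti lam)
    (hspec : spectrum ℝ (G.adjMatrix ℝ) = Set.range lam)
    (hmult : ∀ i, m i = Module.finrank ℝ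
      (Module.End.eigenspace (Matrix.toLin' (G.adjMatrix ℝ)) (lam i)))
    (hdeg : ∀ i, (p i).degree = (i : ℕ))
    (horth : ∀ i j, i ≠ j →
      (∑ r, (m r : ℝ) * (p i).eval (lam r) * (p j).eval (lam r)) / (Fintype.card V : ℝ) = 0)
    (hnorm : ∀ i,
      (∑ r, (m r : ℝ) * (p i).eval (lam r) * (p i).eval (lam r)) / (Fintype.card V : ℝ)
        = (p i).eval (lam 0))
    (hshort : ∀ ℓ : ℕ, Odd ℓ → ℓ < 2 * d + 1 → Matrix.trace (G.adjMatrix ℝ ^ ℓ) = 0)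
    (hfinite : ∃ ℓ : ℕ, Odd ℓ ∧ 0 < Matrix.trace (G.adjMatrix ℝ ^ ℓ)) :
    ∀ (u v : V) (i : Fin (d + 1)), G.dist u v % 2 ≠ (i : ℕ) % 2 →
      Polynomial.aeval (G.adjMatrix ℝ) (p i) u v = 0 := by
  classical
  have hV : Nonempty V := hconn.nonempty
  set A : Matrix V V ℝ := G.adjMatrix ℝ with hAdef
  have hA : A.IsHermitian := by
    ext i j
    rw [Matrix.conjTranspose_apply, star_trivial, hAdef, SimpleGraph.adjMatrix_apply,
      SimpleGraph.adjMatrix_apply]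
    by_cases h : G.Adj i j
    · rw [if_pos (G.adj_symm h), if_pos h]
    · rw [if_neg (fun h' => h (G.adj_symm h')), if_neg h]
  set ν : V → ℝ := hA.eigenvalues with hν
  set U : Matrix V V ℝ := (hA.eigenvectorUnitary : Matrix V V ℝ) with hU
  have hU1 : star U * U = 1 := Matrix.mem_unitaryGroup_iff'.mp hA.eigenvectorUnitary.2
  have hU2 : U * star U = 1 := Matrix.mem_unitaryGroup_iff.mp hA.eigenvectorUnitary.2
  have hspec' : A = U * Matrix.diagonal ν * star U := by
    have := hA.spectral_theorem
    simpa using this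
  have hpow : ∀ t : ℕ, A ^ t = U * (Matrix.diagonal ν) ^ t * star U := by
    intro t
    induction t with
    | zero => simp [hU2]
    | succ t iht =>
      rw [pow_succ, iht, pow_succ, hspec']
      simp only [Matrix.mul_assoc]
      rw [← Matrix.mul_assoc (star U) U, hU1, Matrix.one_mul]
  have htrace : ∀ t : ℕ, Matrix.trace (A ^ t) = ∑ j, ν j ^ t := by
    intro t
    rw [hpow t, Matrix.trace_mul_cycle, hU1, Matrix.one_mul, Matrix.diagonal_pow,
      Matrix.trace_diagonal]
    simp [Pi.pow_apply]
  have hmemrange : ∀ j, ν j ∈ Set.range lam := by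
    intro j
    rw [← hspec]
    exact hA.eigenvalues_mem_spectrum_real j
  choose ρ hρ using fun j => Set.mem_range.mp (hmemrange j)
  -- dimension of eigenspaces
  have htl : ∀ M : Matrix V V ℝ, Matrix.toLin' M = M.mulVecLin := fun M =>
    LinearMap.ext fun x => by rw [Matrix.toLin'_apply, Matrix.mulVecLin_apply]
  have hdim : ∀ μ : ℝ, Module.finrank ℝ (Module.End.eigenspace (Matrix.toLin' A) μ)
      = #(Finset.univ.filter fun j => ν j = μ) := by
    intro μ
    let e : (V → ℝ) ≃ₗ[ℝ] (V → ℝ) :=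
      LinearEquiv.ofLinear (Matrix.toLin' U) (Matrix.toLin' (star U))
        (by rw [← Matrix.toLin'_mul, hU2, Matrix.toLin'_one])
        (by rw [← Matrix.toLin'_mul, hU1, Matrix.toLin'_one])
    have hDU : Matrix.diagonal ν * star U = star U * A := by
      rw [hspec']
      simp only [← Matrix.mul_assoc]
      rw [hU1, Matrix.one_mul]
    have hAU : A * U = U * Matrix.diagonal ν := by
      rw [hspec']
      simp only [Matrix.mul_assoc]
      rw [hU1, Matrix.mul_one]
    have hmap : Module.End.eigenspace (Matrix.toLin' A) μ
        = Submodule.map (e : (V → ℝ) →ₗ[ℝ] (V → ℝ))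
            (Module.End.eigenspace (Matrix.toLin' (Matrix.diagonal ν)) μ) := by
      ext x
      simp only [Submodule.mem_map, Module.End.mem_eigenspace_iff]
      constructor
      · intro hx
        refine ⟨Matrix.toLin' (star U) x, ?_, ?_⟩
        · rw [← Matrix.toLin'_mul_apply, hDU, Matrix.toLin'_mul_apply, hx, _root_.map_smul]
        · show Matrix.toLin' U (Matrix.toLin' (star U) x) = x
          rw [← Matrix.toLin'_mul_apply, hU2, Matrix.toLin'_one, LinearMap.id_apply]
      · rintro ⟨y, hy, rfl⟩
        show Matrix.toLin' A ((e : (V → ℝ) →ₗ[ℝ] (V → ℝ)) y)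
          = μ • (e : (V → ℝ) →ₗ[ℝ] (V → ℝ)) y
        have hey : (e : (V → ℝ) →ₗ[ℝ] (V → ℝ)) y = Matrix.toLin' U y := rfl
        rw [hey, ← Matrix.toLin'_mul_apply, hAU, Matrix.toLin'_mul_apply, hy, _root_.map_smul]
    rw [hmap, LinearEquiv.finrank_map_eq]
    have hker : Module.End.eigenspace (Matrix.toLin' (Matrix.diagonal ν)) μ
        = LinearMap.ker ((Matrix.diagonal (fun j => ν j - μ)).mulVecLin) := by
      rw [Module.End.eigenspace_def, ← htl]
      congr 1
      have h1 : Matrix.diagonal (fun j => ν j - μ)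
          = Matrix.diagonal ν - μ • (1 : Matrix V V ℝ) := by
        rw [Matrix.smul_one_eq_diagonal, Matrix.diagonal_sub]
      rw [h1, map_sub, _root_.map_smul, Matrix.toLin'_one]
      rfl
    rw [hker]
    have hrn := LinearMap.finrank_range_add_finrank_ker
      ((Matrix.diagonal (fun j => ν j - μ)).mulVecLin)
    have hrange : Module.finrank ℝ
        (LinearMap.range ((Matrix.diagonal (fun j => ν j - μ)).mulVecLin))
        = Fintype.card {j // ¬ (ν j - μ = 0)} := Matrix.rank_diagonal (fun j => ν j - μ)
    have hfin : Module.finrank ℝ (V → ℝ) = Fintype.card V :=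
      Module.finrank_fintype_fun_eq_card ℝ
    have hcompl := Fintype.card_subtype_compl (fun j => ν j - μ = 0)
    have hle := Fintype.card_subtype_le (fun j => ν j - μ = 0)
    have hsub : Fintype.card {j // ν j - μ = 0} = #(Finset.univ.filter fun j => ν j = μ) := by
      rw [Fintype.card_subtype]
      congr 1
      ext j
      simp [sub_eq_zero]
    rw [hrange, hfin] at hrn
    omega
  have hcnt : ∀ r, m r = #(Finset.univ.filter fun j => ρ j = r) := by
    intro r
    rw [hmult r, hdim (lam r)]
    congr 1
    ext j
    simp only [Finset.mem_filter, Finset.mem_univ, true_and]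
    constructor
    · intro h
      exact hanti.injective (by rw [hρ j, h])
    · intro h
      rw [← h, hρ j]
  have hmoment : ∀ t : ℕ, Matrix.trace (A ^ t) = ∑ r, (m r : ℝ) * lam r ^ t := by
    intro t
    rw [htrace t]
    calc ∑ j, ν j ^ t
        = ∑ r, ∑ j ∈ Finset.univ.filter fun j => ρ j = r, ν j ^ t :=
          (Finset.sum_fiberwise_of_maps_to (fun j _ => Finset.mem_univ (ρ j)) _).symm
      _ = ∑ r, (m r : ℝ) * lam r ^ t := by
          refine Finset.sum_congr rfl fun r _ => ?_
          have hterm : ∀ j ∈ Finset.univ.filter fun j => ρ j = r, ν j ^ t = lam r ^ t := by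
            intro j hj
            rw [← (Finset.mem_filter.mp hj).2, hρ j]
          rw [Finset.sum_congr rfl hterm, Finset.sum_const, nsmul_eq_mul, hcnt r]
  have hoddmom : ∀ t : ℕ, t % 2 = 1 → t ≤ 2 * d → ∑ r, (m r : ℝ) * lam r ^ t = 0 := by
    intro t ht hle
    rw [← hmoment t]
    exact hshort t (Nat.odd_iff.mpr ht) (by omega)
  have hm1 : ∀ r, 0 < m r := by
    intro r
    rcases Nat.eq_zero_or_pos (m r) with h | h
    · exfalso
      have hsp : lam r ∈ spectrum ℝ A := by rw [hspec]; exact Set.mem_range_self r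
      have hsp2 : lam r ∈ spectrum ℝ (Matrix.toLin' A) := by
        have : spectrum ℝ (Matrix.toLinAlgEquiv' A) = spectrum ℝ A :=
          AlgEquiv.spectrum_eq Matrix.toLinAlgEquiv' A
        rw [show Matrix.toLin' A = Matrix.toLinAlgEquiv' A from rfl, this]
        exact hsp
      have hev : Module.End.HasEigenvalue (Matrix.toLin' A) (lam r) :=
        Module.End.hasEigenvalue_iff_mem_spectrum.mpr hsp2
      have hne : Module.End.eigenspace (Matrix.toLin' A) (lam r) ≠ ⊥ := hev
      have hz : Module.finrank ℝ (Module.End.eigenspace (Matrix.toLin' A) (lam r)) = 0 := by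
        rw [← hmult r]; exact h
      exact hne (Submodule.finrank_eq_zero.mp hz)
    · exact h
  -- bilinear-form helper lemmas
  have hBlin : ∀ (f : Polynomial ℝ) (s : Finset ℕ) (c : ℕ → ℝ) (g : ℕ → Polynomial ℝ),
      (∑ r, (m r : ℝ) * f.eval (lam r) * (∑ j ∈ s, Polynomial.C (c j) * g j).eval (lam r))
      = ∑ j ∈ s, c j * ∑ r, (m r : ℝ) * f.eval (lam r) * (g j).eval (lam r) := by
    intro f s c g
    have h1 : ∀ r : Fin (d + 1), (m r : ℝ) * f.eval (lam r)
          * (∑ j ∈ s, Polynomial.C (c j) * g j).eval (lam r)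
        = ∑ j ∈ s, c j * ((m r : ℝ) * f.eval (lam r) * (g j).eval (lam r)) := by
      intro r
      rw [Polynomial.eval_finset_sum, Finset.mul_sum]
      exact Finset.sum_congr rfl fun j _ => by
        rw [Polynomial.eval_mul, Polynomial.eval_C]; ring
    rw [Finset.sum_congr rfl fun r _ => h1 r, Finset.sum_comm]
    exact Finset.sum_congr rfl fun j _ => (Finset.mul_sum _ _ _).symm
  have hBexp : ∀ f g : Polynomial ℝ, f.natDegree < d + 1 → g.natDegree < d + 1 →
      (∑ r, (m r : ℝ) * f.eval (lam r) * g.eval (lam r))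
      = ∑ a ∈ Finset.range (d + 1), ∑ b ∈ Finset.range (d + 1),
          f.coeff a * g.coeff b * ∑ r, (m r : ℝ) * lam r ^ (a + b) := by
    intro f g hf hg
    have h1 : ∀ r : Fin (d + 1), (m r : ℝ) * f.eval (lam r) * g.eval (lam r)
        = ∑ a ∈ Finset.range (d + 1), ∑ b ∈ Finset.range (d + 1),
            f.coeff a * g.coeff b * ((m r : ℝ) * lam r ^ (a + b)) := by
      intro r
      have h2 : (m r : ℝ) * f.eval (lam r) * g.eval (lam r)
          = (∑ a ∈ Finset.range (d + 1), f.coeff a * lam r ^ a)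
            * (∑ b ∈ Finset.range (d + 1), g.coeff b * lam r ^ b) * (m r : ℝ) := by
        rw [← Polynomial.eval_eq_sum_range' hf, ← Polynomial.eval_eq_sum_range' hg]; ring
      rw [h2, Finset.sum_mul_sum, Finset.sum_mul]
      refine Finset.sum_congr rfl fun a _ => ?_
      rw [Finset.sum_mul]
      refine Finset.sum_congr rfl fun b _ => ?_
      rw [pow_add]; ring
    rw [Finset.sum_congr rfl fun r _ => h1 r, Finset.sum_comm]
    refine Finset.sum_congr rfl fun a _ => ?_
    rw [Finset.sum_comm]
    refine Finset.sum_congr rfl fun b _ => ?_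
    rw [Finset.mul_sum]
  have hNV : (0 : ℝ) < (Fintype.card V : ℝ) := by exact_mod_cast Fintype.card_pos
  -- parity of coefficients of the predistance polynomials
  have hpar : ∀ (i : Fin (d + 1)) (k : ℕ), ¬ k % 2 = (i : ℕ) % 2 → (p i).coeff k = 0 := by
    intro i
    have hnd : (p i).natDegree = (i : ℕ) := Polynomial.natDegree_eq_of_degree_eq_some (hdeg i)
    have hid : (i : ℕ) ≤ d := Nat.lt_succ_iff.mp i.isLt
    have hB0 : ∀ j : Fin (d + 1), j ≠ i →
        (∑ r, (m r : ℝ) * (p i).eval (lam r) * (p j).eval (lam r)) = 0 := by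
      intro j hj
      have := horth i j (Ne.symm hj)
      rcases div_eq_zero_iff.mp this with h | h
      · exact h
      · exact absurd h (ne_of_gt hNV)
    set o : Polynomial ℝ := ∑ k ∈ Finset.range (d + 1),
        if k % 2 = (i : ℕ) % 2 then 0 else Polynomial.C ((p i).coeff k) * Polynomial.X ^ k
      with ho
    have hocoeff : ∀ b, o.coeff b =
        if b < d + 1 then (if b % 2 = (i : ℕ) % 2 then 0 else (p i).coeff b) else 0 := by
      intro b
      rw [ho, Polynomial.finset_sum_coeff]
      have hterm : ∀ k ∈ Finset.range (d + 1),
          (if k % 2 = (i : ℕ) % 2 then 0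
            else Polynomial.C ((p i).coeff k) * Polynomial.X ^ k).coeff b
          = if k = b then (if k % 2 = (i : ℕ) % 2 then 0 else (p i).coeff k) else 0 := by
        intro k _
        by_cases h1 : k % 2 = (i : ℕ) % 2
        · rw [if_pos h1, Polynomial.coeff_zero]
          simp [h1]
        · rw [if_neg h1, Polynomial.coeff_C_mul, Polynomial.coeff_X_pow]
          by_cases h2 : k = b
          · subst h2
            simp [h1]
          · simp [h1, h2, Ne.symm h2]
      rw [Finset.sum_congr rfl hterm, Finset.sum_ite_eq' (Finset.range (d + 1)) b]
      simp [Finset.mem_range]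
    have hodeg : o.degree < ((i : ℕ) : WithBot ℕ) := by
      rw [Polynomial.degree_lt_iff_coeff_zero]
      intro k hk
      rw [hocoeff k]
      by_cases h1 : k < d + 1
      · rw [if_pos h1]
        by_cases h2 : k % 2 = (i : ℕ) % 2
        · rw [if_pos h2]
        · rw [if_neg h2]
          have hki : k ≠ (i : ℕ) := fun he => h2 (by rw [he])
          exact Polynomial.coeff_eq_zero_of_natDegree_lt (by rw [hnd]; omega)
      · rw [if_neg h1]
    obtain ⟨c, hc⟩ := aux_span
      (fun j => if h : j < d + 1 then p ⟨j, h⟩ else Polynomial.X ^ j)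
      (fun j => by
        show (if h : j < d + 1 then p ⟨j, h⟩ else Polynomial.X ^ j).degree = (j : WithBot ℕ)
        by_cases h : j < d + 1
        · rw [dif_pos h, hdeg ⟨j, h⟩]
        · rw [dif_neg h]
          exact Polynomial.degree_X_pow j)
      (i : ℕ) o hodeg
    have hBio : (∑ r, (m r : ℝ) * (p i).eval (lam r) * o.eval (lam r)) = 0 := by
      rw [hc, hBlin]
      apply Finset.sum_eq_zero
      intro j hj
      have hji : j < (i : ℕ) := Finset.mem_range.mp hj
      have hjd : j < d + 1 := by omega
      rw [dif_pos hjd]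
      rw [hB0 ⟨j, hjd⟩ (by
        intro he
        have hval : j = (i : ℕ) := congrArg Fin.val he
        omega), mul_zero]
    have hond : o.natDegree < d + 1 := by
      apply Nat.lt_succ_of_le
      rw [Polynomial.natDegree_le_iff_coeff_eq_zero]
      intro N hN
      rw [hocoeff N, if_neg (by omega)]
    have hend : (p i - o).natDegree < d + 1 := by
      apply Nat.lt_succ_of_le
      refine le_trans (Polynomial.natDegree_sub_le _ _) (max_le ?_ ?_)
      · rw [hnd]; exact hid
      · exact Nat.lt_succ_iff.mp hond
    have heo : (∑ r, (m r : ℝ) * ((p i - o).eval (lam r)) * o.eval (lam r)) = 0 := by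
      rw [hBexp _ _ hend hond]
      apply Finset.sum_eq_zero
      intro a ha
      apply Finset.sum_eq_zero
      intro b hb
      have ha' : a < d + 1 := Finset.mem_range.mp ha
      have hb' : b < d + 1 := Finset.mem_range.mp hb
      by_cases hpa : a % 2 = (i : ℕ) % 2
      · by_cases hpb : b % 2 = (i : ℕ) % 2
        · rw [hocoeff b, if_pos hb', if_pos hpb, mul_zero, zero_mul]
        · have hmom0 : (∑ r, (m r : ℝ) * lam r ^ (a + b)) = 0 := by
            apply hoddmom
            · have := Nat.add_mod a b 2
              omega
            · omega
          rw [hmom0, mul_zero]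
      · have hea : (p i - o).coeff a = 0 := by
          rw [Polynomial.coeff_sub, hocoeff a, if_pos ha', if_neg hpa, sub_self]
        rw [hea, zero_mul, zero_mul]
    have hoo : (∑ r, (m r : ℝ) * o.eval (lam r) * o.eval (lam r)) = 0 := by
      have hsplit : (∑ r, (m r : ℝ) * (p i).eval (lam r) * o.eval (lam r))
          = (∑ r, (m r : ℝ) * ((p i - o).eval (lam r)) * o.eval (lam r))
            + (∑ r, (m r : ℝ) * o.eval (lam r) * o.eval (lam r)) := by
        rw [← Finset.sum_add_distrib]
        refine Finset.sum_congr rfl fun r _ => ?_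
        rw [Polynomial.eval_sub]
        ring
      rw [hBio, heo, zero_add] at hsplit
      exact hsplit.symm
    have hev : ∀ r, o.eval (lam r) = 0 := by
      intro r
      have h1 : ∀ r : Fin (d + 1), r ∈ Finset.univ →
          0 ≤ (m r : ℝ) * o.eval (lam r) * o.eval (lam r) := by
        intro r _
        rw [mul_assoc]
        exact mul_nonneg (Nat.cast_nonneg _) (mul_self_nonneg _)
      have h2 := (Finset.sum_eq_zero_iff_of_nonneg h1).mp hoo r (Finset.mem_univ r)
      have hm : (m r : ℝ) ≠ 0 := Nat.cast_ne_zero.mpr (hm1 r).ne'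
      rcases mul_eq_zero.mp h2 with h | h
      · rcases mul_eq_zero.mp h with h' | h'
        · exact absurd h' hm
        · exact h'
      · exact h
    have ho0 : o = 0 := by
      apply Polynomial.eq_zero_of_natDegree_lt_card_of_eval_eq_zero o hanti.injective hev
      rw [Fintype.card_fin]
      exact hond
    intro k hk
    by_cases hkd : k < d + 1
    · have h1 : o.coeff k = (p i).coeff k := by
        rw [hocoeff k, if_pos hkd, if_neg hk]
      rw [← h1, ho0, Polynomial.coeff_zero]
    · exact Polynomial.coeff_eq_zero_of_natDegree_lt (by rw [hnd]; omega)
  -- walks of wrong parity do not exist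
  have hwalk : ∀ (x y : V) (k : ℕ), k ≤ d → ¬ k % 2 = G.dist x y % 2 → (A ^ k) x y = 0 := by
    intro x y k hkd hkp
    rw [hAdef, SimpleGraph.adjMatrix_pow_apply_eq_card_walk]
    norm_cast
    rw [Fintype.card_eq_zero_iff]
    constructor
    rintro ⟨w, hw⟩
    simp only [Set.mem_setOf_eq] at hw
    obtain ⟨q, hq⟩ := hconn.exists_walk_length_eq_dist x y
    have hdl : G.dist x y ≤ k := by
      have := SimpleGraph.dist_le w
      omega
    have hodd : Odd (k + G.dist x y) := Nat.odd_iff.mpr (by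
      have := Nat.add_mod k (G.dist x y) 2
      omega)
    have hlt : k + G.dist x y < 2 * d + 1 := by omega
    have h0 := hshort (k + G.dist x y) hodd hlt
    have hpos : 0 < Matrix.trace (A ^ (k + G.dist x y)) := by
      rw [hAdef]
      show (0 : ℝ) < ∑ z, (G.adjMatrix ℝ ^ (k + G.dist x y)).diag z
      apply Finset.sum_pos'
      · intro z _
        show (0:ℝ) ≤ (G.adjMatrix ℝ ^ (k + G.dist x y)) z z
        rw [SimpleGraph.adjMatrix_pow_apply_eq_card_walk]
        positivity
      · refine ⟨x, Finset.mem_univ x, ?_⟩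
        show (0:ℝ) < (G.adjMatrix ℝ ^ (k + G.dist x y)) x x
        rw [SimpleGraph.adjMatrix_pow_apply_eq_card_walk]
        have hne : Nonempty {p : G.Walk x x | p.length = k + G.dist x y} :=
          ⟨⟨w.append q.reverse, by
            simp only [Set.mem_setOf_eq, SimpleGraph.Walk.length_append,
              SimpleGraph.Walk.length_reverse, hw, hq]⟩⟩
        exact_mod_cast Fintype.card_pos
    rw [h0] at hpos
    exact lt_irrefl 0 hpos
  -- conclusion
  intro u v i hpari
  have hnd : (p i).natDegree = (i : ℕ) := Polynomial.natDegree_eq_of_degree_eq_some (hdeg i)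
  have hid : (i : ℕ) ≤ d := Nat.lt_succ_iff.mp i.isLt
  rw [Polynomial.aeval_eq_sum_range]
  rw [Matrix.sum_apply]
  apply Finset.sum_eq_zero
  intro k hk
  have hki : k ≤ (i : ℕ) := by
    have := Finset.mem_range.mp hk
    omega
  rw [Matrix.smul_apply, smul_eq_mul]
  by_cases hkp : k % 2 = (i : ℕ) % 2
  · rw [hwalk u v k (le_trans hki hid) (by rw [hkp]; exact fun h => hpari h.symm), mul_zero]
  · rw [hpar i k hkp, zero_mul]
end
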